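/- arXiv:2405.06448 — 6 statements merged into one kernel-verified Lean document; each statement's English description precedes it below -/
import Mathlib

section
/- Let A be a δ_p-ring and I ⊆ A a square-zero δ_p-ideal. Then there is an exact sequence of abelian groups 0 → I^{δ_p = 1} → G_m^{δ_p}(A) → G_m^{δ_p}(A/I), where I^{δ_p=1} = {a ∈ I : δ_p(a) = a}, G_m^{δ_p}(B) denotes the group of units u with δ_p(u) = 0, and the first map sends a to 1 + a. -/
/-- A `δ_p`-ring: a commutative ring `A` with an operation `δ : A → A` satisfying
`δ 0 = δ 1 = 0`, the additive identity
`δ (x+y) = δ x + δ y + (x^p + y^p - (x+y)^p)/p`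
(written with the exact integer coefficients `(p.choose i)/p` for `0 < i < p`),
and the multiplicative identity
`δ (x*y) = x^p δ y + y^p δ x + p δ x δ y`. -/
structure DeltaRing (p : ℕ) (A : Type*) [CommRing A] where
  δ : A → A
  delta_zero : δ 0 = 0
  delta_one : δ 1 = 0
  delta_add : ∀ x y : A, δ (x + y) = δ x + δ y -
      ∑ i ∈ Finset.Ioo 0 p, ((p.choose i / p : ℕ) : A) * x ^ i * y ^ (p - i)
  delta_mul : ∀ x y : A,
      δ (x * y) = x ^ p * δ y + y ^ p * δ x + (p : A) * δ x * δ y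

/-! If `a * a = 0`, the correction term `((1 + a)^p - 1 - a^p) / p` in the additive identity
reduces to its linear part `(p.choose (p - 1) / p) • a = a`, so `δ (1 + a) = δ a - a`.
Hence `1 + a` is a unit with `δ (1 + a) = 0` exactly when `δ a = a`, and a unit `u ≡ 1 mod I`
is `1 + (u - 1)` with `u - 1` in the square-zero ideal `I`. -/

section

variable {p : ℕ} {A : Type*} [CommRing A]

theorem sum_Ioo_choose_div_mul_pow_of_mul_self_eq_zero (hp : 1 < p) {a : A} (ha : a * a = 0) :
    ∑ i ∈ Finset.Ioo 0 p, ((p.choose i / p : ℕ) : A) * 1 ^ i * a ^ (p - i) = a := by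
  have hmem : p - 1 ∈ Finset.Ioo 0 p := Finset.mem_Ioo.mpr ⟨by omega, by omega⟩
  rw [Finset.sum_eq_single_of_mem (p - 1) hmem]
  · have hchoose : p.choose (p - 1) = p := by
      rw [Nat.choose_symm_of_eq_add (show p = (p - 1) + 1 by omega), Nat.choose_one_right]
    rw [hchoose, Nat.div_self (by omega), show p - (p - 1) = 1 by omega]
    simp
  · intro i hi _
    have hsq : a ^ 2 = 0 := by rw [sq, ha]
    rw [pow_eq_zero_of_le (by rw [Finset.mem_Ioo] at hi; omega) hsq, mul_zero]

namespace DeltaRing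

theorem delta_one_add_of_mul_self_eq_zero (hp : 1 < p) (D : DeltaRing p A) {a : A}
    (ha : a * a = 0) : D.δ (1 + a) = D.δ a - a := by
  rw [D.delta_add, D.delta_one, sum_Ioo_choose_div_mul_pow_of_mul_self_eq_zero hp ha, zero_add]

theorem delta_one_add_eq_zero_iff (hp : 1 < p) (D : DeltaRing p A) {a : A} (ha : a * a = 0) :
    D.δ (1 + a) = 0 ↔ D.δ a = a := by
  rw [D.delta_one_add_of_mul_self_eq_zero hp ha, sub_eq_zero]

end DeltaRing

end

theorem rankOneUnits_squareZero_exact_general {p : ℕ} (hp : p.Prime) {A : Type*} [CommRing A]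
    (D : DeltaRing p A) (I : Ideal A)
    (hsq : ∀ a ∈ I, ∀ b ∈ I, a * b = 0) :
    (∀ a ∈ I, D.δ a = a → IsUnit (1 + a) ∧ D.δ (1 + a) = 0) ∧
    (∀ a b : A, (1 : A) + a = 1 + b → a = b) ∧
    (∀ u : Aˣ, D.δ (u : A) = 0 →
      (Ideal.Quotient.mk I (u : A) = 1 ↔ ∃ a ∈ I, D.δ a = a ∧ (u : A) = 1 + a)) := by
  refine ⟨fun a haI hδa => ⟨?_, ?_⟩, fun a b => add_left_cancel, fun u hu => ⟨fun hu1 => ?_, ?_⟩⟩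
  · exact IsNilpotent.isUnit_one_add ⟨2, by rw [sq, hsq a haI a haI]⟩
  · exact (D.delta_one_add_eq_zero_iff hp.one_lt (hsq a haI a haI)).mpr hδa
  · have hmem : (u : A) - 1 ∈ I := by
      rwa [← Ideal.Quotient.eq_zero_iff_mem, map_sub, map_one, sub_eq_zero]
    have hu_eq : (u : A) = 1 + ((u : A) - 1) := by ring
    refine ⟨(u : A) - 1, hmem, ?_, hu_eq⟩
    rw [← D.delta_one_add_eq_zero_iff hp.one_lt (hsq _ hmem _ hmem), ← hu_eq, hu]
  · rintro ⟨a, haI, -, hua⟩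
    rw [hua, map_add, map_one, Ideal.Quotient.eq_zero_iff_mem.mpr haI, add_zero]

/-- For a square-zero δ_p-ideal , there is an exact sequence
: the map 
sends  injectively to rank 1 units of , and its image
is exactly the kernel of the map to the rank 1 units of . -/
theorem rankOneUnits_squareZero_exact {p : ℕ} (hp : p.Prime) {A : Type*} [CommRing A]
    (D : DeltaRing p A) (I : Ideal A)
    (hsq : ∀ a ∈ I, ∀ b ∈ I, a * b = 0)
    (hδ : ∀ a ∈ I, D.δ a ∈ I)
    (D' : DeltaRing p (A ⧸ I))
    (hcompat : ∀ x : A, D'.δ (Ideal.Quotient.mk I x) = Ideal.Quotient.mk I (D.δ x)) :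
    (∀ a ∈ I, D.δ a = a → IsUnit (1 + a) ∧ D.δ (1 + a) = 0) ∧
    (∀ a b : A, (1 : A) + a = 1 + b → a = b) ∧
    (∀ u : Aˣ, D.δ (u : A) = 0 →
      (Ideal.Quotient.mk I (u : A) = 1 ↔ ∃ a ∈ I, D.δ a = a ∧ (u : A) = 1 + a)) :=
  rankOneUnits_squareZero_exact_general hp D I hsq
end

section
/- Let A be a δ_p-ring and I a δ_p-ideal such that A is classically (I,p)-complete and all powers I^m are closed in the p-adic topology. Then the quotient map A → A/I² induces an isomorphism on rank 1 units: G_m^{δ_p}(A) ≅ G_m^{δ_p}(A/I²). -/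
section

variable {A : Type*} [CommRing A]

namespace Ideal

/-- `K` is closed in the `J`-adic topology. -/
def IsAdicallyClosed (J K : Ideal A) : Prop :=
  ∀ x, (∀ n, ∃ y ∈ K, x - y ∈ J ^ n) → x ∈ K

theorem IsAdicallyClosed.sup_of_pow {I P : Ideal A} {m : ℕ}
    (h : IsAdicallyClosed P (I ^ m)) : IsAdicallyClosed (I ⊔ P) (I ^ m) := by
  refine fun x hx => h x fun n => ?_
  obtain ⟨y, hy, hxy⟩ := hx (m + n)
  obtain ⟨z, hz, w, hw, hzw⟩ := Submodule.mem_sup.mp (sup_pow_add_le_pow_sup_pow hxy)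
  exact ⟨y + z, add_mem hy hz, by rwa [← sub_sub, ← hzw, add_sub_cancel_left]⟩

theorem mul_mem_pow_of_le {I : Ideal A} {a b : A} {s t u : ℕ} (ha : a ∈ I ^ s)
    (hb : b ∈ I ^ t) (hu : u ≤ s + t) : a * b ∈ I ^ u :=
  pow_le_pow_right hu (pow_add I s t ▸ mul_mem_mul ha hb)

theorem pow_mem_pow_of_le {I : Ideal A} {a : A} {s e u : ℕ} (ha : a ∈ I ^ s)
    (hu : u ≤ s * e) : a ^ e ∈ I ^ u :=
  pow_le_pow_right hu (pow_mul I s e ▸ pow_mem_pow ha e)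

end Ideal

theorem IsHausdorff.eq_zero_of_forall_mem_pow {J : Ideal A} [IsHausdorff J A] {x : A}
    (h : ∀ n, x ∈ J ^ n) : x = 0 :=
  IsHausdorff.haus ‹_› x fun n => by simpa [SModEq.zero] using h n

theorem IsPrecomplete.exists_sub_mem_pow_of_succ_sub_mem {J : Ideal A} [IsPrecomplete J A]
    {f : ℕ → A} (hf : ∀ n, f (n + 1) - f n ∈ J ^ n) : ∃ L, ∀ n, L - f n ∈ J ^ n := by
  have hcauchy {m n : ℕ} (hmn : m ≤ n) : f n - f m ∈ J ^ m := by
    induction n, hmn using Nat.le_induction with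
    | base => simp
    | succ n hmn ih =>
      rw [← sub_add_sub_cancel]
      exact add_mem (Ideal.pow_le_pow_right hmn (hf n)) ih
  obtain ⟨L, hL⟩ := IsPrecomplete.prec ‹_› (f := f) fun hmn => by
    simpa [SModEq.sub_mem] using neg_mem (hcauchy hmn)
  refine ⟨L, fun n => ?_⟩
  simpa [SModEq.sub_mem] using neg_mem (SModEq.sub_mem.mp (hL n))

theorem IsPrecomplete.exists_limit_of_refine {J : Ideal A} [IsPrecomplete J A]
    (P : ℕ → A → Prop) {a : A} (h0 : P 0 a)
    (hstep : ∀ n x, P n x → ∃ y, P (n + 1) y ∧ y - x ∈ J ^ n) :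
    ∃ L, ∀ n, ∃ x, P n x ∧ L - x ∈ J ^ n := by
  choose next hnext using hstep
  let seq : (n : ℕ) → {x // P n x} :=
    fun n => Nat.rec ⟨a, h0⟩ (fun n x => ⟨next n x.1 x.2, (hnext n x.1 x.2).1⟩) n
  obtain ⟨L, hL⟩ := exists_sub_mem_pow_of_succ_sub_mem (f := fun n => (seq n).1)
    fun n => (hnext n (seq n).1 (seq n).2).2
  exact ⟨L, fun n => ⟨_, (seq n).2, hL n⟩⟩

end

namespace DeltaRing

variable {p : ℕ} {A : Type*} [CommRing A] (D : DeltaRing p A)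

def phi : A →* A where
  toFun x := x ^ p + p * D.δ x
  map_one' := by simp [D.delta_one]
  map_mul' x y := by rw [D.delta_mul]; ring

theorem phi_apply (x : A) : D.phi x = x ^ p + p * D.δ x := rfl

theorem delta_mul_eq_phi_mul (x y : A) : D.δ (x * y) = D.phi x * D.δ y + y ^ p * D.δ x := by
  rw [D.delta_mul, phi_apply]; ring

theorem natCast_pow_dvd_phi (hp : 0 < p) (k : ℕ) : (p : A) ^ k ∣ D.phi ((p : A) ^ k) := by
  rw [map_pow]
  refine pow_dvd_pow_of_dvd ⟨(p : A) ^ (p - 1) + D.δ p, ?_⟩ k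
  rw [phi_apply, mul_add, ← pow_succ', Nat.sub_add_cancel hp]

theorem delta_add_sub_sub_mem (x y : A) :
    D.δ (x + y) - D.δ x - D.δ y ∈ Ideal.span {x * y} := by
  suffices h : ∑ i ∈ Finset.Ioo 0 p, ((p.choose i / p : ℕ) : A) * x ^ i * y ^ (p - i) ∈
      Ideal.span {x * y} by
    convert neg_mem h using 1; rw [D.delta_add]; ring
  refine Ideal.sum_mem _ fun i hi => Ideal.mem_span_singleton.mpr ?_
  rw [Finset.mem_Ioo] at hi
  rw [mul_assoc]
  exact (mul_dvd_mul (dvd_pow_self x hi.1.ne') (dvd_pow_self y (by omega))).mul_left _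

-- Only the term `i = p - 1` of `delta_add` is linear in `x`, and its coefficient is `1`.
theorem delta_one_add_sub_mem (hp : 1 < p) (x : A) :
    D.δ (1 + x) - D.δ x + x ∈ Ideal.span {x * x} := by
  have hmem : p - 1 ∈ Finset.Ioo 0 p := Finset.mem_Ioo.mpr ⟨by omega, by omega⟩
  have hcoeff : ((p.choose (p - 1) / p : ℕ) : A) = 1 := by
    rw [Nat.choose_symm hp.le, Nat.choose_one_right, Nat.div_self (by omega), Nat.cast_one]
  suffices h : ∑ i ∈ (Finset.Ioo 0 p).erase (p - 1),
      ((p.choose i / p : ℕ) : A) * 1 ^ i * x ^ (p - i) ∈ Ideal.span {x * x} by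
    convert neg_mem h using 1
    rw [D.delta_add, D.delta_one, ← Finset.sum_erase_add _ _ hmem, hcoeff,
      Nat.sub_sub_self hp.le]
    ring
  refine Ideal.sum_mem _ fun i hi => Ideal.mem_span_singleton.mpr ?_
  rw [Finset.mem_erase, Finset.mem_Ioo] at hi
  exact Dvd.dvd.mul_left (pow_two x ▸ pow_dvd_pow x (by omega)) _

theorem delta_inv_eq_zero (u : Aˣ) (hu : D.δ u = 0) : D.δ ↑u⁻¹ = 0 := by
  have h := D.delta_mul_eq_phi_mul u ↑u⁻¹
  rw [Units.mul_inv, D.delta_one, hu, mul_zero, add_zero, phi_apply, hu, mul_zero,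
    add_zero] at h
  calc D.δ ↑u⁻¹ = (↑u⁻¹ * ↑u) ^ p * D.δ ↑u⁻¹ := by simp
    _ = (↑u⁻¹ : A) ^ p * (↑u ^ p * D.δ ↑u⁻¹) := by ring
    _ = 0 := by rw [← h, mul_zero]

/-- The rank one units `G_m^{δ}(A)`. -/
def rankOneUnits : Subgroup Aˣ where
  carrier := {u | D.δ u = 0}
  one_mem' := D.delta_one
  mul_mem' {u v} hu hv := by
    simp only [Set.mem_ofPred_eq, Units.val_mul, D.delta_mul, hu.out, hv.out]; ring
  inv_mem' {u} hu := D.delta_inv_eq_zero u hu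

theorem delta_add_mem {K : Ideal A} {x y : A} (hx : D.δ x ∈ K) (hy : D.δ y ∈ K)
    (hxy : x * y ∈ K) : D.δ (x + y) ∈ K := by
  have hdefect := (Ideal.span_singleton_le_iff_mem K).mpr hxy (D.delta_add_sub_sub_mem x y)
  simpa only [sub_sub, sub_add_cancel] using add_mem hdefect (add_mem hx hy)

variable {I J : Ideal A} {m n : ℕ} {x : A}

theorem delta_mem_pow (hp : 0 < p) (hδ : ∀ a ∈ I, D.δ a ∈ I) (hx : x ∈ I ^ n) :
    D.δ x ∈ I ^ n := by
  induction hx using Submodule.pow_induction_on_left' with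
  | algebraMap r => simp
  | add x y i hx hy ihx ihy => exact D.delta_add_mem ihx ihy (Ideal.mul_mem_right _ _ hx)
  | mem_mul a ha i x hx ih =>
    have hδa : D.δ a ∈ I ^ 1 := by rw [pow_one]; exact hδ a ha
    rw [D.delta_mul, mul_assoc]
    refine add_mem (add_mem ?_ ?_) ?_
    · exact Ideal.mul_mem_pow_of_le (Ideal.pow_mem_pow ha p) ih (by omega)
    · exact Ideal.mul_mem_pow_of_le (Ideal.pow_mem_pow_of_le hx le_rfl) hδa
        (by nlinarith)
    · exact Ideal.mul_mem_left _ _ (Ideal.mul_mem_pow_of_le hδa ih (by omega))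

theorem delta_mem_pow_succ_sup (hp : 1 < p) (hδ : ∀ a ∈ I, D.δ a ∈ I) (hm : 2 ≤ m)
    (hx : x ∈ I ^ m) : D.δ x ∈ I ^ (m + 1) ⊔ Ideal.span {(p : A)} * I ^ m := by
  obtain ⟨n, rfl⟩ : ∃ n, m = n + 1 := ⟨m - 1, by omega⟩
  rw [pow_succ'] at hx
  induction hx using Submodule.mul_induction_on' with
  | mem_mul_mem a ha y hy =>
    have hδa : D.δ a ∈ I ^ 1 := by rw [pow_one]; exact hδ a ha
    have hδy := D.delta_mem_pow (by omega) hδ hy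
    rw [D.delta_mul, mul_assoc]
    refine add_mem (Submodule.mem_sup_left (add_mem ?_ ?_)) (Submodule.mem_sup_right ?_)
    · exact Ideal.mul_mem_pow_of_le (Ideal.pow_mem_pow ha p) hδy (by omega)
    · exact Ideal.mul_mem_pow_of_le (Ideal.pow_mem_pow_of_le hy le_rfl) hδa (by nlinarith)
    · exact Ideal.mul_mem_mul (Ideal.mem_span_singleton_self _)
        (Ideal.mul_mem_pow_of_le hδa hδy (by omega))
  | add x hx y hy ihx ihy =>
    refine D.delta_add_mem ihx ihy (Submodule.mem_sup_left ?_)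
    rw [← pow_succ'] at hx hy
    exact Ideal.mul_mem_pow_of_le hx hy (by omega)

theorem delta_mem_span_pow_succ_mul_sup (hp : 1 < p) (hδ : ∀ a ∈ I, D.δ a ∈ I) (hm : 2 ≤ m)
    {k : ℕ} (hx : x ∈ Ideal.span {(p : A) ^ k} * I ^ m ⊔ I ^ (m + 1)) :
    D.δ x ∈ Ideal.span {(p : A) ^ (k + 1)} * I ^ m ⊔ I ^ (m + 1) := by
  obtain ⟨s, hs, i, hi, rfl⟩ := Submodule.mem_sup.mp hx
  obtain ⟨c, hc, rfl⟩ := Ideal.mem_span_singleton_mul.mp hs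
  refine D.delta_add_mem ?_ (Submodule.mem_sup_right (D.delta_mem_pow (by omega) hδ hi))
    (Submodule.mem_sup_right (Ideal.mul_mem_left _ _ hi))
  obtain ⟨b, hb⟩ := D.natCast_pow_dvd_phi (by omega) k
  obtain ⟨u, hu, v, hv, huv⟩ := Submodule.mem_sup.mp (D.delta_mem_pow_succ_sup hp hδ hm hc)
  obtain ⟨z, hz, rfl⟩ := Ideal.mem_span_singleton_mul.mp hv
  -- `δ(p^k c) = φ(p^k) δ(c) + c^p δ(p^k)`, and `p^k ∣ φ(p^k)`.
  refine Submodule.mem_sup.mpr ⟨(p : A) ^ (k + 1) * (b * z),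
    Ideal.mul_mem_mul (Ideal.mem_span_singleton_self _) (Ideal.mul_mem_left _ _ hz),
    (p : A) ^ k * b * u + c ^ p * D.δ ((p : A) ^ k),
    add_mem (Ideal.mul_mem_left _ _ hu)
      (Ideal.mul_mem_right _ _ (Ideal.pow_mem_pow_of_le hc (by nlinarith))), ?_⟩
  rw [D.delta_mul_eq_phi_mul, hb, ← huv]
  ring

theorem delta_mem_pow_pred_of_natCast_mem (hp : 0 < p) (hpJ : (p : A) ∈ J) (hx : x ∈ J ^ n) :
    D.δ x ∈ J ^ (n - 1) := by
  induction hx using Submodule.pow_induction_on_left' with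
  | algebraMap r => simp
  | add x y i hx hy ihx ihy =>
    exact D.delta_add_mem ihx ihy (Ideal.mul_mem_pow_of_le hx hy (by omega))
  | mem_mul a ha i x hx ih =>
    have hpJ1 : (p : A) ∈ J ^ 1 := by rw [pow_one]; exact hpJ
    rw [D.delta_mul, mul_right_comm, Nat.succ_sub_one]
    refine add_mem (add_mem ?_ ?_) ?_
    · exact Ideal.mul_mem_pow_of_le (Ideal.pow_mem_pow ha p) ih (by omega)
    · exact Ideal.mul_mem_right _ _ (Ideal.pow_mem_pow_of_le hx (by nlinarith))
    · exact Ideal.mul_mem_right _ _ (Ideal.mul_mem_pow_of_le hpJ1 ih (by omega))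

theorem delta_sub_delta_mem (hp : 0 < p) (hpJ : (p : A) ∈ J) {y : A}
    (h : x - y ∈ J ^ (n + 1)) : D.δ x - D.δ y ∈ J ^ n := by
  have hdefect := D.delta_add_sub_sub_mem y (x - y)
  rw [add_sub_cancel] at hdefect
  rw [← sub_add_cancel (D.δ x - D.δ y) (D.δ (x - y))]
  refine add_mem ((Ideal.span_singleton_le_iff_mem _).mpr ?_ hdefect)
    (D.delta_mem_pow_pred_of_natCast_mem hp hpJ h)
  exact Ideal.mul_mem_left _ _ (Ideal.pow_le_pow_right n.le_succ h)

theorem mem_pow_succ_of_sub_delta_mem (hp : 1 < p) (hδ : ∀ a ∈ I, D.δ a ∈ I)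
    (hclosed : (Ideal.span {(p : A)}).IsAdicallyClosed (I ^ (m + 1))) (hm : 2 ≤ m)
    (hx : x ∈ I ^ m) (hfix : x - D.δ x ∈ I ^ (m + 1)) : x ∈ I ^ (m + 1) := by
  have hk (k : ℕ) : x ∈ Ideal.span {(p : A) ^ k} * I ^ m ⊔ I ^ (m + 1) := by
    induction k with
    | zero => simpa using Submodule.mem_sup_left hx
    | succ k ih =>
      rw [← sub_add_cancel x (D.δ x)]
      exact add_mem (Submodule.mem_sup_right hfix)
        (D.delta_mem_span_pow_succ_mul_sup hp hδ hm ih)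
  refine hclosed x fun n => ?_
  obtain ⟨s, hs, i, hi, hsi⟩ := Submodule.mem_sup.mp (hk n)
  refine ⟨i, hi, ?_⟩
  rw [← hsi, add_sub_cancel_right, Ideal.span_singleton_pow]
  exact Ideal.mul_le_left hs

-- Adding `y = -p^k a` removes the error `p^k a` and leaves the error `-δ(y)`, which is
-- divisible by `p^(k+1)` modulo `I^(m+1)`.
theorem exists_add_sub_delta_sub_mem (hp : 1 < p) (hδ : ∀ a ∈ I, D.δ a ∈ I) (hm : 2 ≤ m)
    {c : A} {k : ℕ} (hx : x ∈ I ^ m)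
    (hr : x - D.δ x - c ∈ Ideal.span {(p : A) ^ k} * I ^ m ⊔ I ^ (m + 1)) :
    ∃ y ∈ Ideal.span {(p : A) ^ k} * I ^ m,
      x + y - D.δ (x + y) - c ∈ Ideal.span {(p : A) ^ (k + 1)} * I ^ m ⊔ I ^ (m + 1) := by
  obtain ⟨s, hs, i, hi, hsi⟩ := Submodule.mem_sup.mp hr
  obtain ⟨a, ha, rfl⟩ := Ideal.mem_span_singleton_mul.mp hs
  have hy : (p : A) ^ k * -a ∈ Ideal.span {(p : A) ^ k} * I ^ m :=
    Ideal.mul_mem_mul (Ideal.mem_span_singleton_self _) (neg_mem ha)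
  have hdefect : D.δ (x + (p : A) ^ k * -a) - D.δ x - D.δ ((p : A) ^ k * -a) ∈ I ^ (m + 1) :=
    (Ideal.span_singleton_le_iff_mem _).mpr
      (Ideal.mul_mem_pow_of_le hx (Ideal.mul_le_right hy) (by omega))
      (D.delta_add_sub_sub_mem _ _)
  refine ⟨_, hy, ?_⟩
  convert sub_mem (Submodule.mem_sup_right (sub_mem hi hdefect))
    (D.delta_mem_span_pow_succ_mul_sup hp hδ hm (Submodule.mem_sup_left hy)) using 1
  linear_combination -hsi

theorem exists_sub_delta_sub_mem (hp : 1 < p) (hδ : ∀ a ∈ I, D.δ a ∈ I)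
    [IsPrecomplete (I ⊔ Ideal.span {(p : A)}) A]
    (hclosed : ∀ m, (Ideal.span {(p : A)}).IsAdicallyClosed (I ^ m)) (hm : 2 ≤ m) {c : A}
    (hc : c ∈ I ^ m) : ∃ x ∈ I ^ m, x - D.δ x - c ∈ I ^ (m + 1) := by
  have hpJ : (p : A) ∈ I ⊔ Ideal.span {(p : A)} :=
    Submodule.mem_sup_right (Ideal.mem_span_singleton_self _)
  obtain ⟨L, hL⟩ := IsPrecomplete.exists_limit_of_refine
    (J := I ⊔ Ideal.span {(p : A)}) (a := 0)
    (fun k x => x ∈ I ^ m ∧ x - D.δ x - c ∈ Ideal.span {(p : A) ^ k} * I ^ m ⊔ I ^ (m + 1))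
    ⟨zero_mem _, by simpa [D.delta_zero] using Submodule.mem_sup_left hc⟩ <| by
      rintro k x ⟨hx, hr⟩
      obtain ⟨y, hy, hxy⟩ := D.exists_add_sub_delta_sub_mem hp hδ hm hx hr
      refine ⟨x + y, ⟨add_mem hx (Ideal.mul_le_right hy), hxy⟩, ?_⟩
      rw [add_sub_cancel_left]
      refine Ideal.pow_right_mono le_sup_right k ?_
      rw [Ideal.span_singleton_pow]
      exact Ideal.mul_le_left hy
  refine ⟨L, (hclosed m).sup_of_pow L fun n => ?_, (hclosed (m + 1)).sup_of_pow _ fun n => ?_⟩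
  · obtain ⟨x, ⟨hx, -⟩, hLx⟩ := hL n
    exact ⟨x, hx, hLx⟩
  · obtain ⟨x, ⟨-, hr⟩, hLx⟩ := hL (n + 1)
    obtain ⟨s, hs, i, hi, hsi⟩ := Submodule.mem_sup.mp hr
    have hs' : s ∈ (I ⊔ Ideal.span {(p : A)}) ^ n := by
      refine Ideal.pow_le_pow_right n.le_succ (Ideal.pow_right_mono le_sup_right _ ?_)
      rw [Ideal.span_singleton_pow]
      exact Ideal.mul_le_left hs
    refine ⟨i, hi, ?_⟩
    convert add_mem (sub_mem (Ideal.pow_le_pow_right n.le_succ hLx)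
      (D.delta_sub_delta_mem (by omega) hpJ hLx)) hs' using 1
    linear_combination -hsi

theorem exists_delta_mul_one_add_mem (hp : 1 < p) (hδ : ∀ a ∈ I, D.δ a ∈ I)
    [IsPrecomplete (I ⊔ Ideal.span {(p : A)}) A]
    (hclosed : ∀ m, (Ideal.span {(p : A)}).IsAdicallyClosed (I ^ m)) (hm : 2 ≤ m) (u : Aˣ)
    (hu : D.δ u ∈ I ^ m) : ∃ x ∈ I ^ m, D.δ (u * (1 + x)) ∈ I ^ (m + 1) := by
  -- Modulo `I^(m+1)`, `δ(u(1 + x)) ≡ δ(u) - u^p (x - δ(x))`.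
  obtain ⟨x, hx, hr⟩ := D.exists_sub_delta_sub_mem hp hδ hclosed hm
    (Ideal.mul_mem_left _ ((↑u⁻¹ : A) ^ p) hu)
  have hsq : Ideal.span {x * x} ≤ I ^ (m + 1) :=
    (Ideal.span_singleton_le_iff_mem _).mpr (Ideal.mul_mem_pow_of_le hx hx (by omega))
  have hδ1x : D.δ (1 + x) ∈ I ^ m :=
    D.delta_add_mem (by simp [D.delta_one]) (D.delta_mem_pow (by omega) hδ hx) (by simpa)
  obtain ⟨t, ht⟩ : x ∣ (1 + x) ^ p - 1 := by simpa using sub_dvd_pow_sub_pow (1 + x) 1 p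
  have hup : (u : A) ^ p * (↑u⁻¹ : A) ^ p = 1 := by rw [← mul_pow, Units.mul_inv, one_pow]
  refine ⟨x, hx, ?_⟩
  convert add_mem (add_mem (Ideal.mul_mem_left _ ((u : A) ^ p)
      (sub_mem (hsq (D.delta_one_add_sub_mem hp x)) hr))
    (Ideal.mul_mem_pow_of_le hx (Ideal.mul_mem_left _ t hu) (by omega)))
    (Ideal.mul_mem_left _ (p : A) (Ideal.mul_mem_pow_of_le hu hδ1x (by omega))) using 1
  rw [D.delta_mul]
  linear_combination D.δ u * ht - D.δ u * hup

theorem eq_zero_of_delta_one_add_eq_zero (hp : 1 < p) (hδ : ∀ a ∈ I, D.δ a ∈ I)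
    [IsHausdorff (I ⊔ Ideal.span {(p : A)}) A]
    (hclosed : ∀ m, (Ideal.span {(p : A)}).IsAdicallyClosed (I ^ m)) (hx : x ∈ I ^ 2)
    (h : D.δ (1 + x) = 0) : x = 0 := by
  have hpow (n : ℕ) : x ∈ I ^ (n + 2) := by
    induction n with
    | zero => exact hx
    | succ n ih =>
      refine D.mem_pow_succ_of_sub_delta_mem hp hδ (hclosed _) (by omega) ih ?_
      have := (Ideal.span_singleton_le_iff_mem (I ^ (n + 2 + 1))).mpr
        (Ideal.mul_mem_pow_of_le ih ih (by omega)) (D.delta_one_add_sub_mem hp x)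
      rwa [h, zero_sub, neg_add_eq_sub] at this
  exact IsHausdorff.eq_zero_of_forall_mem_pow (J := I ⊔ Ideal.span {(p : A)}) fun n =>
    Ideal.pow_le_pow_right (n.le_add_right 2) (Ideal.pow_right_mono le_sup_left _ (hpow n))

theorem eq_of_sub_mem_sq (hp : 1 < p) (hδ : ∀ a ∈ I, D.δ a ∈ I)
    [IsHausdorff (I ⊔ Ideal.span {(p : A)}) A]
    (hclosed : ∀ m, (Ideal.span {(p : A)}).IsAdicallyClosed (I ^ m)) {u v : Aˣ}
    (hu : u ∈ D.rankOneUnits) (hv : v ∈ D.rankOneUnits) (huv : (u : A) - v ∈ I ^ 2) :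
    u = v := by
  have hx : (↑(v * u⁻¹) : A) - 1 ∈ I ^ 2 := by
    rw [← neg_mem_iff, Units.val_mul, neg_sub, ← u.mul_inv, ← sub_mul]
    exact Ideal.mul_mem_right _ _ huv
  have := D.eq_zero_of_delta_one_add_eq_zero hp hδ hclosed hx
    (by rw [add_sub_cancel]; exact mul_mem hv (inv_mem hu))
  rw [sub_eq_zero, Units.val_eq_one, mul_inv_eq_one] at this
  exact this.symm

theorem exists_mem_rankOneUnits_mk_eq (hp : 1 < p) (hδ : ∀ a ∈ I, D.δ a ∈ I)
    [IsAdicComplete (I ⊔ Ideal.span {(p : A)}) A]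
    (hclosed : ∀ m, (Ideal.span {(p : A)}).IsAdicallyClosed (I ^ m)) {a : A}
    (ha : IsUnit (Ideal.Quotient.mk (I ^ 2) a)) (hδa : D.δ a ∈ I ^ 2) :
    ∃ u ∈ D.rankOneUnits, Ideal.Quotient.mk (I ^ 2) (u : A) = Ideal.Quotient.mk (I ^ 2) a := by
  have := isLocalHom_of_le_jacobson_bot (I ^ 2) ((Ideal.pow_le_self two_ne_zero).trans
    (le_sup_left.trans (IsAdicComplete.le_jacobson_bot (I ⊔ Ideal.span {(p : A)}))))
  have hunit {w : A} (hw : w - a ∈ I ^ 2) : IsUnit w :=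
    isUnit_of_map_unit (Ideal.Quotient.mk (I ^ 2)) w (by rwa [Ideal.Quotient.eq.mpr hw])
  have hpJ : (p : A) ∈ I ⊔ Ideal.span {(p : A)} :=
    Submodule.mem_sup_right (Ideal.mem_span_singleton_self _)
  obtain ⟨L, hL⟩ := IsPrecomplete.exists_limit_of_refine (J := I ⊔ Ideal.span {(p : A)})
    (fun n w => w - a ∈ I ^ 2 ∧ D.δ w ∈ I ^ (n + 2)) ⟨by simp, hδa⟩ <| by
      rintro n w ⟨hwa, hδw⟩
      obtain ⟨w, rfl⟩ := hunit hwa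
      obtain ⟨x, hx, hδx⟩ := D.exists_delta_mul_one_add_mem hp hδ hclosed (by omega) w hδw
      have hwx : (w : A) * x ∈ I ^ (n + 2) := Ideal.mul_mem_left _ _ hx
      refine ⟨w * (1 + x), ⟨?_, hδx⟩, ?_⟩
      · rw [mul_one_add, add_sub_right_comm]
        exact add_mem hwa (Ideal.pow_le_pow_right (by omega) hwx)
      · rw [mul_one_add, add_sub_cancel_left]
        exact Ideal.pow_le_pow_right (by omega) (Ideal.pow_right_mono le_sup_left _ hwx)
  have hLa : L - a ∈ I ^ 2 := (hclosed 2).sup_of_pow _ fun n => by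
    obtain ⟨x, ⟨hxa, -⟩, hLx⟩ := hL n
    exact ⟨x - a, hxa, by rwa [sub_sub_sub_cancel_right]⟩
  have hδL : D.δ L = 0 := IsHausdorff.eq_zero_of_forall_mem_pow
    (J := I ⊔ Ideal.span {(p : A)}) fun n => by
      obtain ⟨x, ⟨-, hδx⟩, hLx⟩ := hL (n + 1)
      rw [← sub_add_cancel (D.δ L) (D.δ x)]
      exact add_mem (D.delta_sub_delta_mem (by omega) hpJ hLx)
        (Ideal.pow_le_pow_right (by omega) (Ideal.pow_right_mono le_sup_left _ hδx))
  exact ⟨(hunit hLa).unit, hδL, Ideal.Quotient.eq.mpr hLa⟩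

end DeltaRing

/-- Let `A` be a δ_p-ring and `I` a δ_p-ideal such that `A` is classically `(I,p)`-complete
and all powers `I^m` are closed in the `p`-adic topology.  Then the quotient map
`A → A/I²` induces an isomorphism on rank 1 units (units killed by δ_p). -/
theorem rankOneUnits_iso_mod_sq {p : ℕ} (hp : p.Prime) {A : Type*} [CommRing A]
    (D : DeltaRing p A) (I : Ideal A)
    (hδ : ∀ a ∈ I, D.δ a ∈ I)
    (hcomplete : IsAdicComplete (I ⊔ Ideal.span {(p : A)}) A)
    (hclosed : ∀ (m : ℕ) (x : A),
      (∀ n : ℕ, ∃ y ∈ I ^ m, x - y ∈ Ideal.span {(p : A)} ^ n) → x ∈ I ^ m)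
    (D' : DeltaRing p (A ⧸ I ^ 2))
    (hcompat : ∀ x : A,
      D'.δ (Ideal.Quotient.mk (I ^ 2) x) = Ideal.Quotient.mk (I ^ 2) (D.δ x)) :
    (∀ u₁ u₂ : Aˣ, D.δ (u₁ : A) = 0 → D.δ (u₂ : A) = 0 →
        Ideal.Quotient.mk (I ^ 2) (u₁ : A) = Ideal.Quotient.mk (I ^ 2) (u₂ : A) →
        u₁ = u₂) ∧
    (∀ v : (A ⧸ I ^ 2)ˣ, D'.δ (v : A ⧸ I ^ 2) = 0 →
        ∃ u : Aˣ, D.δ (u : A) = 0 ∧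
          Ideal.Quotient.mk (I ^ 2) (u : A) = (v : A ⧸ I ^ 2)) := by
  have := hcomplete
  refine ⟨fun u₁ u₂ h₁ h₂ h =>
    D.eq_of_sub_mem_sq hp.one_lt hδ hclosed h₁ h₂ (Ideal.Quotient.eq.mp h), fun v hv => ?_⟩
  obtain ⟨a, ha⟩ := Ideal.Quotient.mk_surjective (v : A ⧸ I ^ 2)
  have hδa : D.δ a ∈ I ^ 2 := by
    rw [← Ideal.Quotient.eq_zero_iff_mem, ← hcompat, ha, hv]
  obtain ⟨u, hu, hua⟩ :=
    D.exists_mem_rankOneUnits_mk_eq hp.one_lt hδ hclosed (ha ▸ v.isUnit) hδa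
  exact ⟨u, hu, hua.trans ha⟩
end

section
/- Let A be a derived p-complete δ_p-ring with Frobenius lift φ_A. Then for every r ∈ ℕ, taking fixed points of φ_A on A/p^r gives an exact sequence 0 → (Z/p^r)(A) → A/p^r → A/p^r, where the second map is φ_A − 1 and (Z/p^r)(A) denotes the group of locally constant Z/p^r-valued functions on Spec A. -/
namespace ASD

variable {p : ℕ} {A : Type*} [CommRing A]

lemma range_split (hp : p.Prime) :
    Finset.range (p+1) = insert 0 (insert p (Finset.Ioo 0 p)) := by
  have h2 := hp.two_le
  ext k
  simp only [Finset.mem_range, Finset.mem_insert, Finset.mem_Ioo]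
  omega

lemma choose_cancel (hp : p.Prime) {i : ℕ} (hi : i ∈ Finset.Ioo 0 p) :
    (p.choose i / p) * p = p.choose i := by
  rw [Finset.mem_Ioo] at hi
  exact Nat.div_mul_cancel (hp.dvd_choose_self (by omega : i ≠ 0) hi.2)

/-- key binomial: (x+y)^p = x^p + y^p + ∑_{0<i<p} C(p,i) x^i y^(p-i) -/
lemma add_pow_split (hp : p.Prime) (x y : A) :
    (x + y) ^ p = x ^ p + y ^ p +
      ∑ i ∈ Finset.Ioo 0 p, (p.choose i : A) * x ^ i * y ^ (p - i) := by
  have h2 := hp.two_le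
  have h := add_pow x y p
  rw [range_split hp] at h
  rw [Finset.sum_insert (by simp [Finset.mem_Ioo]; omega),
      Finset.sum_insert (by simp [Finset.mem_Ioo])] at h
  simp only [pow_zero, Nat.choose_zero_right, Nat.choose_self, Nat.sub_self, Nat.cast_one,
    one_mul, mul_one, Nat.sub_zero] at h
  rw [h, Finset.sum_congr rfl (fun i hi => by ring :
    ∀ i ∈ Finset.Ioo 0 p, x ^ i * y ^ (p - i) * (p.choose i : A)
      = (p.choose i : A) * x ^ i * y ^ (p - i))]
  ring


/-- the Frobenius lift as a ring hom -/
def Phi (hp : p.Prime) (D : DeltaRing p A) : A →+* A where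
  toFun x := x ^ p + (p : A) * D.δ x
  map_one' := by simp [D.delta_one]
  map_zero' := by simp [D.delta_zero, zero_pow hp.ne_zero]
  map_mul' x y := by
    simp only [D.delta_mul, mul_pow]; ring
  map_add' x y := by
    simp only [D.delta_add]
    rw [add_pow_split hp x y]
    have : ((p:A)) * ∑ i ∈ Finset.Ioo 0 p, ((p.choose i / p : ℕ) : A) * x ^ i * y ^ (p - i)
        = ∑ i ∈ Finset.Ioo 0 p, (p.choose i : A) * x ^ i * y ^ (p - i) := by
      rw [Finset.mul_sum]
      refine Finset.sum_congr rfl (fun i hi => ?_)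
      have := choose_cancel hp hi
      have : (((p.choose i / p) * p : ℕ) : A) = (p.choose i : A) := by rw [this]
      push_cast at this
      rw [← this]; ring
    rw [mul_sub, this]; ring

lemma Phi_apply (hp : p.Prime) (D : DeltaRing p A) (x : A) :
    Phi hp D x = x ^ p + (p : A) * D.δ x := rfl


lemma smod_top_iff {I : Ideal A} {x : A} :
    x ≡ 0 [SMOD (I • ⊤ : Submodule A A)] ↔ x ∈ I := by
  rw [SModEq.zero, smul_eq_mul, Ideal.mul_top]

lemma haus0 (hA : IsAdicComplete (Ideal.span {(p : A)}) A) {x : A}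
    (h : ∀ n, x ∈ Ideal.span {(p:A)^n}) : x = 0 := by
  refine hA.toIsHausdorff.haus x (fun n => ?_)
  rw [smod_top_iff, Ideal.span_singleton_pow]
  exact h n

lemma span_le_span {a : A} {m k : ℕ} (h : m ≤ k) :
    Ideal.span {a^k} ≤ Ideal.span {a^m} :=
  Ideal.span_singleton_le_span_singleton.mpr (pow_dvd_pow _ h)

lemma prec0 (hA : IsAdicComplete (Ideal.span {(p : A)}) A) {f : ℕ → A}
    (hf : ∀ n, f (n+1) - f n ∈ Ideal.span {(p:A)^(n+1)}) :
    ∃ L, ∀ n, L - f n ∈ Ideal.span {(p:A)^n} := by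
  have key : ∀ {m n : ℕ}, m ≤ n → f n - f m ∈ Ideal.span {(p:A)^m} := by
    intro m n h
    induction n with
    | zero => simp at h; subst h; simp
    | succ n ih =>
      rcases Nat.lt_or_ge m (n+1) with h' | h'
      · have h1 : f (n+1) - f m = (f (n+1) - f n) + (f n - f m) := by ring
        rw [h1]
        exact add_mem (span_le_span (by omega) (hf n)) (ih (by omega))
      · have : m = n + 1 := by omega
        subst this; simp
  obtain ⟨L, hL⟩ := hA.toIsPrecomplete.prec (f := f) (by
    intro m n h
    rw [SModEq.sub_mem, smul_eq_mul, Ideal.mul_top, Ideal.span_singleton_pow]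
    have := key h
    simpa using neg_mem this )
  refine ⟨L, fun n => ?_⟩
  have := hL n
  rw [SModEq.sub_mem, smul_eq_mul, Ideal.mul_top, Ideal.span_singleton_pow] at this
  simpa using neg_mem this


lemma pow_mem_span_pow {a c : A} (h : c ∈ Ideal.span {a}) (n : ℕ) :
    c ^ n ∈ Ideal.span {a ^ n} := by
  rw [Ideal.mem_span_singleton] at h ⊢
  exact pow_dvd_pow_of_dvd h n

lemma unit_one_sub_p_mul (hA : IsAdicComplete (Ideal.span {(p : A)}) A) (a : A) :
    ∃ b, (1 - (p:A) * a) * b = 1 := by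
  set x := (p:A) * a with hx
  have hxm : x ∈ Ideal.span {(p:A)} := Ideal.mem_span_singleton.mpr ⟨a, rfl⟩
  obtain ⟨L, hL⟩ := prec0 hA (f := fun n => ∑ k ∈ Finset.range (n+1), x ^ k) (by
    intro n
    rw [Finset.sum_range_succ (n := n+1)]
    simpa using pow_mem_span_pow hxm (n+1))
  refine ⟨L, ?_⟩
  have key : ∀ n, (1 - x) * L - 1 ∈ Ideal.span {(p:A)^n} := by
    intro n
    have h1 : (1 - x) * L - 1
        = (1 - x) * (L - ∑ k ∈ Finset.range (n+1), x ^ k)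
          + ((1 - x) * (∑ k ∈ Finset.range (n+1), x ^ k) - 1) := by ring
    have h2 : (1 - x) * (∑ k ∈ Finset.range (n+1), x ^ k) - 1 = -(x ^ (n+1)) := by
      have := geom_sum_mul x (n+1)
      have h3 : (∑ i ∈ Finset.range (n + 1), x ^ i) * (x - 1) = x ^ (n+1) - 1 := this
      have : (1 - x) * (∑ k ∈ Finset.range (n+1), x ^ k) = 1 - x ^ (n+1) := by
        have := congrArg (fun t => -t) h3
        simp only [neg_sub] at this
        calc (1 - x) * (∑ k ∈ Finset.range (n+1), x ^ k)
            = -((∑ i ∈ Finset.range (n + 1), x ^ i) * (x - 1)) := by ring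
          _ = 1 - x ^ (n+1) := by rw [h3]; ring
      rw [this]; ring
    rw [h1, h2]
    refine add_mem (Ideal.mul_mem_left _ _ (hL n)) ?_
    exact neg_mem (span_le_span (by omega) (pow_mem_span_pow hxm (n+1)))
  have := haus0 hA key
  linear_combination this


lemma mem_span_singleton_iff {a c : A} : a ∈ Ideal.span {c} ↔ c ∣ a :=
  Ideal.mem_span_singleton

lemma pow_cong {a b c : A} (h : a - b ∈ Ideal.span {c}) (k : ℕ) :
    a ^ k - b ^ k ∈ Ideal.span {c} := by
  rw [mem_span_singleton_iff] at h ⊢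
  exact h.trans (sub_dvd_pow_sub_pow a b k)

lemma mul_mem_span_mul {a b c d : A} (ha : a ∈ Ideal.span {c}) (hb : b ∈ Ideal.span {d}) :
    a * b ∈ Ideal.span {c * d} := by
  rw [mem_span_singleton_iff] at ha hb ⊢
  exact mul_dvd_mul ha hb

lemma span_pow_succ {n : ℕ} : Ideal.span {(p:A) ^ (n+1)} = Ideal.span {(p:A) * (p:A) ^ n} := by
  rw [pow_succ]; ring_nf

lemma pow_p_cong (hp : p.Prime) {a b : A} {n : ℕ} (hn : 1 ≤ n)
    (h : a - b ∈ Ideal.span {(p:A) ^ n}) :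
    a ^ p - b ^ p ∈ Ideal.span {(p:A) ^ (n+1)} := by
  have hgeom := geom_sum₂_mul a b p
  have h1 : a - b ∈ Ideal.span {(p:A)} := by
    have := span_le_span (a := (p:A)) hn
    simpa using this h
  have hsum : (∑ i ∈ Finset.range p, a ^ i * b ^ (p - 1 - i)) ∈ Ideal.span {(p:A)} := by
    have heach : ∀ i ∈ Finset.range p,
        a ^ i * b ^ (p - 1 - i) - b ^ (p-1) ∈ Ideal.span {(p:A)} := by
      intro i hi
      rw [Finset.mem_range] at hi
      have : a ^ i * b ^ (p - 1 - i) - b ^ (p-1)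
          = (a ^ i - b ^ i) * b ^ (p - 1 - i) := by
        rw [sub_mul, ← pow_add]
        congr 2
        omega
      rw [this]
      exact Ideal.mul_mem_right _ _ (pow_cong h1 i)
    have hsub := Ideal.sum_mem _ heach
    have : (∑ i ∈ Finset.range p, a ^ i * b ^ (p - 1 - i))
        = (∑ i ∈ Finset.range p, (a ^ i * b ^ (p - 1 - i) - b ^ (p-1)))
          + (p : A) * b ^ (p-1) := by
      rw [Finset.sum_sub_distrib]
      simp only [Finset.sum_const, Finset.card_range, nsmul_eq_mul]
      ring
    rw [this]
    exact add_mem hsub (Ideal.mul_mem_right _ _ (Ideal.mem_span_singleton_self _))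
  have : a ^ p - b ^ p = (∑ i ∈ Finset.range p, a ^ i * b ^ (p - 1 - i)) * (a - b) := hgeom.symm
  rw [this, span_pow_succ]
  exact mul_mem_span_mul hsum h

lemma pow_eq_of_idem {e : A} (he : e * e = e) {k : ℕ} (hk : 1 ≤ k) : e ^ k = e := by
  induction k with
  | zero => omega
  | succ k ih =>
    rcases Nat.eq_or_lt_of_le hk with h | h
    · simp [← h]
    · rw [pow_succ, ih (by omega), he]

lemma pow_sub_self_mem {b : A} (hb : b * b - b ∈ Ideal.span {(p:A)}) {k : ℕ} (hk : 1 ≤ k) :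
    b ^ k - b ∈ Ideal.span {(p:A)} := by
  induction k with
  | zero => omega
  | succ k ih =>
    rcases Nat.eq_or_lt_of_le hk with h | h
    · simp [← h]
    · have : b ^ (k+1) - b = b * (b ^ k - b) + (b * b - b) := by ring
      rw [this]
      exact add_mem (Ideal.mul_mem_left _ _ (ih (by omega))) hb

/-- lift an element idempotent mod p to an exact idempotent, congruent mod p -/
lemma lift_idem (hp : p.Prime) (hA : IsAdicComplete (Ideal.span {(p : A)}) A) {b : A}
    (hb : b * b - b ∈ Ideal.span {(p:A)}) :
    ∃ f, f * f = f ∧ f - b ∈ Ideal.span {(p:A)} := by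
  have h2 := hp.two_le
  have hbp : b ^ p - b ∈ Ideal.span {(p:A)} := pow_sub_self_mem hb (by omega)
  -- Cauchy sequence b^(p^n)
  have hf : ∀ n, b ^ (p^(n+1)) - b ^ (p^n) ∈ Ideal.span {(p:A)^(n+1)} := by
    intro n
    induction n with
    | zero => simpa using hbp
    | succ n ih =>
      have h1 : b ^ (p^(n+2)) = (b ^ (p^(n+1))) ^ p := by
        rw [← pow_mul, ← pow_succ]
      have h2 : b ^ (p^(n+1)) = (b ^ (p^n)) ^ p := by
        rw [← pow_mul, ← pow_succ]
      rw [h1, h2]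
      exact pow_p_cong hp (by omega) (by rw [← h2]; exact ih)
  obtain ⟨L, hL⟩ := prec0 hA (f := fun n => b ^ (p^n)) hf
  have hLb : L - b ∈ Ideal.span {(p:A)} := by
    have h1 := hL 1
    have : L - b = (L - b ^ (p^1)) + (b ^ p - b) := by
      rw [pow_one]; ring
    rw [this]
    exact add_mem (by simpa using h1) hbp
  have hLp : L ^ p = L := by
    refine sub_eq_zero.mp (haus0 hA (fun n => ?_))
    rcases Nat.eq_zero_or_pos n with h | h
    · subst h; simp
    · have t1 : L ^ p - (b ^ (p^n)) ^ p ∈ Ideal.span {(p:A)^(n+1)} :=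
        pow_p_cong hp h (hL n)
      have t2 : b ^ (p^(n+1)) - b ^ (p^n) ∈ Ideal.span {(p:A)^(n+1)} := hf n
      have t3 : b ^ (p^n) - L ∈ Ideal.span {(p:A)^n} := by
        have := hL n; simpa using neg_mem this
      have hh : (b ^ (p^n)) ^ p = b ^ (p^(n+1)) := by
        rw [← pow_mul, ← pow_succ]
      have : L ^ p - L = (L ^ p - (b ^ (p^n)) ^ p) + (b ^ (p^(n+1)) - b ^ (p^n))
          + (b ^ (p^n) - L) := by rw [← hh]; ring
      rw [this]
      exact add_mem (add_mem (span_le_span (by omega) t1)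
        (span_le_span (by omega) t2)) t3
  -- the idempotent
  refine ⟨L ^ (p-1), ?_, ?_⟩
  · have : L ^ (p-1) * L ^ (p-1) = L ^ p * L ^ (p-2) := by
      rw [← pow_add, ← pow_add]; congr 1; omega
    rw [this, hLp, ← pow_succ']
    congr 1; omega
  · have h1 : L ^ (p-1) - b ^ (p-1) ∈ Ideal.span {(p:A)} := pow_cong hLb (p-1)
    have h2 : b ^ (p-1) - b ∈ Ideal.span {(p:A)} := pow_sub_self_mem hb (by omega)
    have : L ^ (p-1) - b = (L ^ (p-1) - b ^ (p-1)) + (b ^ (p-1) - b) := by ring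
    rw [this]; exact add_mem h1 h2


lemma idem_cube {e f : A} (he : e * e = e) (hf : f * f = f) :
    (e - f) * (e - f) * (e - f) = e - f := by
  linear_combination (e + 1 - 3*f) * he + (3*e - f - 1) * hf

lemma idem_zero_of_mem (hA : IsAdicComplete (Ideal.span {(p : A)}) A) {e : A}
    (he : e * e = e) (h : e ∈ Ideal.span {(p:A)}) : e = 0 := by
  refine haus0 hA (fun n => ?_)
  induction n with
  | zero => simp
  | succ n ih =>
    have : e = e * e ^ n := by
      rw [← pow_succ', pow_eq_of_idem he (by omega)]
    rw [this, span_pow_succ]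
    exact mul_mem_span_mul h (pow_mem_span_pow h n)

lemma idem_eq (hA : IsAdicComplete (Ideal.span {(p : A)}) A) {e f : A}
    (he : e * e = e) (hf : f * f = f) (h : e - f ∈ Ideal.span {(p:A)}) : e = f := by
  have hd : ∀ n, e - f ∈ Ideal.span {(p:A) ^ n} := by
    intro n
    induction n with
    | zero => simp
    | succ n ih =>
      have h3 : e - f = ((e-f) * (e-f)) * (e - f) := (idem_cube he hf).symm
      rcases Nat.eq_zero_or_pos n with h' | h'
      · subst h'; simpa using h
      · rw [h3, span_pow_succ]
        exact mul_mem_span_mul (Ideal.mul_mem_left _ _ h) ih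
  exact sub_eq_zero.mp (haus0 hA hd)

lemma Phi_idem (hp : p.Prime) (hA : IsAdicComplete (Ideal.span {(p : A)}) A)
    (D : DeltaRing p A) {e : A} (he : e * e = e) : Phi hp D e = e := by
  refine idem_eq hA ?_ he ?_
  · rw [← map_mul, he]
  · rw [Phi_apply, pow_eq_of_idem he hp.one_lt.le]
    have : e + (p:A) * D.δ e - e = (p:A) * D.δ e := by ring
    rw [this]
    exact Ideal.mul_mem_right _ _ (Ideal.mem_span_singleton_self _)


section Tors

/-- (n^p - n)/p -/
def Knat (p n : ℕ) : ℕ := (n ^ p - n) / p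

lemma fermat_nat (hp : p.Prime) (n : ℕ) : p ∣ n ^ p - n := by
  haveI : Fact p.Prime := ⟨hp⟩
  have h : ((n : ZMod p)) ^ p = (n : ZMod p) := ZMod.pow_card _
  have h2 : ((n ^ p : ℕ) : ZMod p) = ((n : ℕ) : ZMod p) := by push_cast; exact h
  have h3 : n ≡ n ^ p [MOD p] := ((ZMod.natCast_eq_natCast_iff _ _ _).mp h2).symm
  exact (Nat.modEq_iff_dvd' (Nat.le_self_pow hp.ne_zero n)).mp h3

lemma K_spec (hp : p.Prime) (n : ℕ) : p * Knat p n + n = n ^ p := by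
  have h := Nat.mul_div_cancel' (fermat_nat hp n)
  have hle := Nat.le_self_pow hp.ne_zero n
  unfold Knat
  omega

lemma nat_add_pow_split (hp : p.Prime) (n : ℕ) :
    (n+1) ^ p = n ^ p + 1 + ∑ i ∈ Finset.Ioo 0 p, p.choose i * n ^ i := by
  have h2 := hp.two_le
  have h := add_pow n 1 p
  rw [range_split hp] at h
  rw [Finset.sum_insert (by simp [Finset.mem_Ioo]; omega),
      Finset.sum_insert (by simp [Finset.mem_Ioo])] at h
  simp only [one_pow, pow_zero, Nat.choose_zero_right, Nat.choose_self, mul_one, one_mul,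
    Nat.cast_id] at h
  rw [h]
  rw [Finset.sum_congr rfl (fun i hi => mul_comm (n ^ i) (p.choose i))]
  ring

lemma K_succ (hp : p.Prime) (n : ℕ) :
    Knat p (n+1) = Knat p n + ∑ i ∈ Finset.Ioo 0 p, (p.choose i / p) * n ^ i := by
  have hp0 : p ≠ 0 := hp.ne_zero
  refine Nat.eq_of_mul_eq_mul_left (Nat.pos_of_ne_zero hp0) ?_
  have h1 := K_spec hp (n+1)
  have h2 := K_spec hp n
  have h3 : p * ∑ i ∈ Finset.Ioo 0 p, (p.choose i / p) * n ^ i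
      = ∑ i ∈ Finset.Ioo 0 p, p.choose i * n ^ i := by
    rw [Finset.mul_sum]
    refine Finset.sum_congr rfl (fun i hi => ?_)
    rw [← mul_assoc, mul_comm p _, choose_cancel hp hi]
  have h4 := nat_add_pow_split hp n
  rw [Nat.mul_add, h3]
  omega

lemma delta_nat_mul (hp : p.Prime) (D : DeltaRing p A) (n : ℕ) (x : A) :
    D.δ ((n : A) * x) = (n : A) * D.δ x - (Knat p n : A) * x ^ p := by
  induction n with
  | zero =>
    simp [D.delta_zero, Knat, zero_pow hp.ne_zero]
  | succ n ih =>
    have hc : ((n+1 : ℕ) : A) * x = (n : A) * x + x := by push_cast; ring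
    rw [hc, D.delta_add, ih]
    have hterm : ∀ i ∈ Finset.Ioo 0 p,
        ((p.choose i / p : ℕ) : A) * ((n:A) * x) ^ i * x ^ (p - i)
          = (((p.choose i / p) * n ^ i : ℕ) : A) * x ^ p := by
      intro i hi
      rw [Finset.mem_Ioo] at hi
      have hip : i + (p - i) = p := by omega
      have key : ((n:A) * x) ^ i * x ^ (p - i) = (n:A) ^ i * x ^ p := by
        rw [mul_pow, mul_assoc, ← pow_add, hip]
      calc ((p.choose i / p : ℕ) : A) * ((n:A) * x) ^ i * x ^ (p - i)
          = ((p.choose i / p : ℕ) : A) * (((n:A) * x) ^ i * x ^ (p - i)) := by ring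
        _ = ((p.choose i / p : ℕ) : A) * ((n:A) ^ i * x ^ p) := by rw [key]
        _ = (((p.choose i / p) * n ^ i : ℕ) : A) * x ^ p := by push_cast; ring
    rw [Finset.sum_congr rfl hterm, ← Finset.sum_mul, ← Nat.cast_sum]
    rw [show ((Knat p (n+1) : ℕ) : A)
        = ((Knat p n : ℕ) : A) + ((∑ i ∈ Finset.Ioo 0 p, (p.choose i / p) * n ^ i : ℕ) : A) by
      rw [K_succ hp n, Nat.cast_add]]
    push_cast
    ring

lemma K_pow_val (hp : p.Prime) (s : ℕ) :
    Knat p (p^(s+1)) + p^s = p^(s + (s+1)*(p-1)) := by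
  have hp0 : p ≠ 0 := hp.ne_zero
  refine Nat.eq_of_mul_eq_mul_left (Nat.pos_of_ne_zero hp0) ?_
  have h1 := K_spec hp (p^(s+1))
  have h2 : (p^(s+1))^p = p^((s+1)*p) := by rw [← pow_mul]
  have h3 : p * p^(s + (s+1)*(p-1)) = p^((s+1)*p) := by
    rw [← pow_succ']
    congr 1
    have h2' := hp.two_le
    cases p with
    | zero => omega
    | succ q => simp only [Nat.add_sub_cancel]; ring
  rw [Nat.mul_add, h3]
  have h5 : p * p^s = p^(s+1) := by rw [← pow_succ']
  omega

/-- key torsion lemma : p^r x ∈ (p^(r+1)) implies x^(p^r) ∈ (p) -/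
lemma tors (hp : p.Prime) (hA : IsAdicComplete (Ideal.span {(p : A)}) A)
    (D : DeltaRing p A) :
    ∀ r : ℕ, ∀ x : A, (p:A)^r * x ∈ Ideal.span {(p:A)^(r+1)} → x ^ (p^r) ∈ Ideal.span {(p:A)} := by
  intro r
  induction r with
  | zero =>
    intro x hx
    simpa using hx
  | succ r ih =>
    intro x hx
    rw [Ideal.mem_span_singleton] at hx
    obtain ⟨w, hw⟩ := hx
    set y := x - (p:A) * w with hy
    have hy0 : (p:A)^(r+1) * y = 0 := by
      rw [hy]; rw [mul_sub, ← mul_assoc, ← pow_succ]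
      rw [← hw]; ring
    -- apply delta to p^(r+1) * y = 0
    have hδ : D.δ (((p^(r+1) : ℕ) : A) * y) = 0 := by
      have : ((p^(r+1) : ℕ) : A) * y = 0 := by push_cast; exact hy0
      rw [this, D.delta_zero]
    rw [delta_nat_mul hp D] at hδ
    have hKc : ((Knat p (p^(r+1)) : ℕ) : A) = (p:A)^(r + (r+1)*(p-1)) - (p:A)^r := by
      have := K_pow_val hp r
      have hcast : ((Knat p (p^(r+1)) + p^r : ℕ) : A) = ((p^(r + (r+1)*(p-1)) : ℕ) : A) := by
        rw [this]
      push_cast at hcast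
      linear_combination hcast
    have heq : ((p:A)^(r + (r+1)*(p-1)) - (p:A)^r) * y ^ p = ((p^(r+1):ℕ) : A) * D.δ y := by
      rw [← hKc]
      linear_combination -hδ
    -- rewrite LHS as p^r * (y^p * (p^((r+1)*(p-1)) - 1))
    have hfact : (p:A)^r * (y ^ p * ((p:A)^((r+1)*(p-1)) - 1)) = ((p^(r+1):ℕ):A) * D.δ y := by
      rw [← heq, pow_add]; ring
    have hpos : 1 ≤ (r+1)*(p-1) := by
      have h2 := hp.two_le
      have : 1 ≤ p - 1 := by omega
      calc 1 ≤ p - 1 := this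
        _ ≤ (r+1)*(p-1) := Nat.le_mul_of_pos_left _ (by omega)
    obtain ⟨b, hb⟩ := unit_one_sub_p_mul hA ((p:A)^((r+1)*(p-1) - 1))
    have hunit : (1 - (p:A) * (p:A)^((r+1)*(p-1) - 1)) = 1 - (p:A)^((r+1)*(p-1)) := by
      rw [← pow_succ']
      congr 2
      omega
    rw [hunit] at hb
    -- p^r * y^p ∈ span {p^(r+1)}
    have hmem : (p:A)^r * y ^ p ∈ Ideal.span {(p:A)^(r+1)} := by
      have h5 : (p:A)^r * y ^ p = ((p:A)^r * (y ^ p * ((p:A)^((r+1)*(p-1)) - 1))) * (-b) := by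
        calc (p:A)^r * y ^ p = (p:A)^r * y ^ p * ((1 - (p:A)^((r+1)*(p-1))) * b) := by
              rw [hb]; ring
          _ = ((p:A)^r * (y ^ p * ((p:A)^((r+1)*(p-1)) - 1))) * (-b) := by ring
      rw [h5, hfact]
      refine Ideal.mul_mem_right _ _ ?_
      rw [Ideal.mem_span_singleton]
      exact ⟨D.δ y, by push_cast; ring⟩
    have hyp := ih (y ^ p) hmem
    rw [← pow_mul] at hyp
    have hxy : x ^ (p ^ (r+1)) - y ^ (p ^ (r+1)) ∈ Ideal.span {(p:A)} := by
      refine pow_cong ?_ _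
      rw [hy]
      have : x - (x - (p:A) * w) = (p:A) * w := by ring
      rw [this]
      exact Ideal.mul_mem_right _ _ (Ideal.mem_span_singleton_self _)
    have : x ^ (p ^ (r+1)) = (x ^ (p ^ (r+1)) - y ^ (p ^ (r+1))) + y ^ (p * p ^ r) := by
      rw [← pow_succ']; ring
    rw [this]
    exact add_mem hxy hyp

end Tors


open Polynomial in
lemma zmod_prod_poly (hp : p.Prime) [NeZero p] :
    ∏ a : ZMod p, (X - C a) = X ^ p - X := by
  haveI : Fact p.Prime := ⟨hp⟩
  have hcard : Fintype.card (ZMod p) = p := ZMod.card p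
  have hroots := FiniteField.roots_X_pow_card_sub_X (ZMod p)
  rw [hcard] at hroots
  have hmonic : (X ^ p - X : (ZMod p)[X]).Monic := by
    have hm := (monic_X_pow (R := ZMod p) p).add_of_left (q := -X) (by
      rw [degree_neg, degree_X, degree_X_pow]
      exact_mod_cast hp.one_lt)
    rwa [← sub_eq_add_neg] at hm
  have hdeg : (X ^ p - X : (ZMod p)[X]).natDegree = p :=
    FiniteField.X_pow_card_sub_X_natDegree_eq _ hp.one_lt
  have hcardroots : (X ^ p - X : (ZMod p)[X]).roots.card
      = (X ^ p - X : (ZMod p)[X]).natDegree := by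
    rw [hroots, hdeg]
    exact (by rw [Finset.card_univ, hcard] : (Finset.univ : Finset (ZMod p)).card = p)
  have := prod_multiset_X_sub_C_of_monic_of_roots_card_eq hmonic hcardroots
  rw [hroots] at this
  rw [← this]
  rfl

open Polynomial in
lemma prod_range_sub_mem (hp : p.Prime) (u : A) :
    (∏ c ∈ Finset.range p, (u - (c:A))) - (u ^ p - u) ∈ Ideal.span {(p:A)} := by
  by_cases htop : Ideal.span {(p:A)} = ⊤
  · rw [htop]; trivial
  haveI : Fact p.Prime := ⟨hp⟩
  haveI : NeZero p := ⟨hp.ne_zero⟩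
  set I := Ideal.span {(p:A)} with hI
  let Q := A ⧸ I
  haveI : Nontrivial Q := Ideal.Quotient.nontrivial_iff.mpr htop
  have hpQ : ((p:ℕ) : Q) = 0 := by
    have : ((p:ℕ) : A) ∈ I := Ideal.mem_span_singleton_self _
    rw [show ((p:ℕ) : Q) = Ideal.Quotient.mk I ((p:ℕ):A) by push_cast; rfl]
    exact (Ideal.Quotient.eq_zero_iff_mem).mpr this
  haveI hchar : CharP Q p := (CharP.charP_iff_prime_eq_zero hp).mpr hpQ
  let f : ZMod p →+* Q := ZMod.castHom dvd_rfl Q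
  let π := Ideal.Quotient.mk I
  -- evaluate the polynomial identity
  have hpoly := congrArg (Polynomial.eval₂ f (π u)) (zmod_prod_poly (p := p) hp)
  rw [Polynomial.eval₂_finset_prod] at hpoly
  simp only [Polynomial.eval₂_sub, Polynomial.eval₂_X, Polynomial.eval₂_C,
    Polynomial.eval₂_pow] at hpoly
  -- reindex the product
  have hre : ∏ a : ZMod p, (π u - f a) = ∏ c ∈ Finset.range p, (π u - ((c:ℕ):Q)) := by
    refine Finset.prod_bij' (fun a _ => a.val) (fun c _ => (c : ZMod p)) ?_ ?_ ?_ ?_ ?_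
    · intro a _; exact Finset.mem_range.mpr (ZMod.val_lt a)
    · intro c _; exact Finset.mem_univ _
    · intro a _
      show ((a.val : ℕ) : ZMod p) = a
      rw [ZMod.natCast_val, ZMod.cast_id]
    · intro c hc; exact ZMod.val_cast_of_lt (Finset.mem_range.mp hc)
    · intro a _
      show π u - f a = π u - ((a.val : ℕ) : Q)
      congr 1
      rw [ZMod.natCast_val]
      rfl
  rw [hre] at hpoly
  -- transfer to A
  have hπ : π ((∏ c ∈ Finset.range p, (u - (c:A))) - (u ^ p - u)) = 0 := by
    rw [map_sub, map_prod]
    have h1 : ∀ c ∈ Finset.range p, π (u - (c:A)) = π u - ((c:ℕ):Q) := by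
      intro c _
      rw [map_sub, map_natCast]
    rw [Finset.prod_congr rfl h1, hpoly]
    rw [map_sub, map_pow]
    ring
  exact (Ideal.Quotient.eq_zero_iff_mem).mp hπ


lemma pow_sub_self_mem_gen {I : Ideal A} {b : A} (hb : b * b - b ∈ I) {k : ℕ} (hk : 1 ≤ k) :
    b ^ k - b ∈ I := by
  induction k with
  | zero => omega
  | succ k ih =>
    rcases Nat.eq_or_lt_of_le hk with h | h
    · simp [← h]
    · have : b ^ (k+1) - b = b * (b ^ k - b) + (b * b - b) := by ring
      rw [this]
      exact add_mem (Ideal.mul_mem_left _ _ (ih (by omega))) hb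

/-- one-step improvement: from `(a²-a)^M ∈ (p)` produce `b ≡ a mod (a²-a)` with `b²-b ∈ (p)`. -/
lemma improve_idem {a : A} {M : ℕ} (hM : 1 ≤ M)
    (hnil : (a * a - a) ^ M ∈ Ideal.span {(p:A)}) :
    ∃ b, b * b - b ∈ Ideal.span {(p:A)} ∧ b - a ∈ Ideal.span {a * a - a} := by
  set ν := a * a - a with hν
  set t : ℕ → A := fun k => ((2*M-1).choose k : A) * a ^ k * (1-a) ^ (2*M-1-k) with ht
  set b : A := ∑ k ∈ Finset.Ico M (2*M), t k with hb
  set c' : A := ∑ k ∈ Finset.range M, t k with hc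
  have hsplit : c' + b = 1 := by
    rw [hc, hb, Finset.sum_range_add_sum_Ico _ (by omega : M ≤ 2*M)]
    have h1 : (1:A) = (a + (1-a)) ^ (2*M-1) := by
      have : a + (1-a) = 1 := by ring
      rw [this, one_pow]
    rw [h1, add_pow]
    have h2 : 2*M-1+1 = 2*M := by omega
    rw [h2]
    refine Finset.sum_congr rfl (fun k hk => ?_)
    simp only [ht]; ring
  have hprod : (a * (1-a)) ^ M ∈ Ideal.span {(p:A)} := by
    have h3 : (a * (1-a)) ^ M = (-1:A)^M * ν ^ M := by
      rw [← neg_pow, hν]; ring_nf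
    rw [h3]
    exact Ideal.mul_mem_left _ _ hnil
  have hbc : b * c' ∈ Ideal.span {(p:A)} := by
    rw [hb, hc, Finset.sum_mul_sum]
    refine Ideal.sum_mem _ (fun k hk => Ideal.sum_mem _ (fun l hl => ?_))
    rw [Finset.mem_Ico] at hk
    rw [Finset.mem_range] at hl
    obtain ⟨k', hk'⟩ : ∃ k', k + l = M + k' := ⟨k + l - M, by omega⟩
    obtain ⟨l', hl'⟩ : ∃ l', (2*M-1-k) + (2*M-1-l) = M + l' := ⟨(2*M-1-k) + (2*M-1-l) - M, by omega⟩
    have h1 : a ^ k * a ^ l = a ^ M * a ^ k' := by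
      rw [← pow_add, hk', pow_add]
    have h2 : (1-a) ^ (2*M-1-k) * (1-a) ^ (2*M-1-l) = (1-a) ^ M * (1-a) ^ l' := by
      rw [← pow_add, hl', pow_add]
    have h3 : t k * t l = ((2*M-1).choose k : A) * ((2*M-1).choose l : A)
        * (a ^ k * a ^ l) * ((1-a) ^ (2*M-1-k) * (1-a) ^ (2*M-1-l)) := by
      simp only [ht]; ring
    rw [h3, h1, h2]
    have h4 : ((2*M-1).choose k : A) * ((2*M-1).choose l : A) * (a ^ M * a ^ k')
        * ((1-a) ^ M * (1-a) ^ l')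
        = (a * (1-a)) ^ M * (((2*M-1).choose k : A) * ((2*M-1).choose l : A)
            * a ^ k' * (1-a) ^ l') := by
      rw [mul_pow]; ring
    rw [h4]
    exact Ideal.mul_mem_right _ _ hprod
  refine ⟨b, ?_, ?_⟩
  · have h5 : b * b - b = -(b * c') := by
      have : b = 1 - c' := by rw [← hsplit]; ring
      rw [this]; ring
    rw [h5]
    exact neg_mem hbc
  · have hmemν : a * a - a ∈ Ideal.span {ν} := by
      rw [hν]; exact Ideal.mem_span_singleton_self _
    have hlast : M ≤ 2*M - 1 := by omega
    have h2M : 2*M = (2*M-1)+1 := by omega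
    rw [hb, h2M, Finset.sum_Ico_succ_top hlast]
    have ht_top : t (2*M-1) = a ^ (2*M-1) := by
      simp only [ht, Nat.choose_self, Nat.sub_self, pow_zero, Nat.cast_one]
      ring
    have hexpr : (∑ k ∈ Finset.Ico M (2*M-1), t k) + t (2*M-1) - a
        = (∑ k ∈ Finset.Ico M (2*M-1), t k) + (a ^ (2*M-1) - a) := by
      rw [ht_top]; ring
    rw [hexpr]
    refine add_mem (Ideal.sum_mem _ (fun k hk => ?_)) ?_
    · rw [Finset.mem_Ico] at hk
      obtain ⟨k1, hk1⟩ : ∃ k1, k = k1 + 1 := ⟨k - 1, by omega⟩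
      obtain ⟨m1, hm1⟩ : ∃ m1, 2*M-1-k = m1 + 1 := ⟨2*M-1-k-1, by omega⟩
      have hfac : t k = ν * (-(((2*M-1).choose k : A) * a ^ k1 * (1-a) ^ m1)) := by
        simp only [ht]
        rw [hm1, hk1, hν, pow_succ, pow_succ]
        ring
      exact Ideal.mem_span_singleton.mpr ⟨_, hfac⟩
    · exact pow_sub_self_mem_gen hmemν (by omega)


lemma idem_tors_zero (hp : p.Prime) (hA : IsAdicComplete (Ideal.span {(p : A)}) A)
    (D : DeltaRing p A) {r : ℕ} {ε : A} (hε : ε * ε = ε)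
    (h : (p:A)^r * ε ∈ Ideal.span {(p:A)^(r+1)}) : ε = 0 := by
  have h2 := tors hp hA D r ε h
  rw [pow_eq_of_idem hε (Nat.one_le_iff_ne_zero.mpr (pow_ne_zero r hp.ne_zero))] at h2
  exact idem_zero_of_mem hA hε h2

lemma backward (hp : p.Prime) (hA : IsAdicComplete (Ideal.span {(p : A)}) A)
    (D : DeltaRing p A) (r : ℕ) {n : ℕ} (e : Fin n → A) (c : Fin n → ℤ)
    (he : ∀ i, IsIdempotentElem (e i)) (x : A)
    (hx : x - ∑ i, (c i : A) * e i ∈ Ideal.span {(p:A)^r}) :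
    Phi hp D x - x ∈ Ideal.span {(p:A)^r} := by
  set s := ∑ i, (c i : A) * e i with hs_def
  have hs : Phi hp D s = s := by
    rw [hs_def, map_sum]
    refine Finset.sum_congr rfl (fun i _ => ?_)
    rw [map_mul, map_intCast, Phi_idem hp hA D (he i).eq]
  obtain ⟨w, hw⟩ := Ideal.mem_span_singleton.mp hx
  have hxsw : x = s + (p:A)^r * w := by linear_combination hw
  have key : Phi hp D x - x = (p:A)^r * (Phi hp D w - w) := by
    rw [hxsw, map_add, hs, map_mul, map_pow, map_natCast]; ring
  rw [key]
  exact Ideal.mul_mem_right _ _ (Ideal.mem_span_singleton_self _)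

lemma forward (hp : p.Prime) (hA : IsAdicComplete (Ideal.span {(p : A)}) A)
    (D : DeltaRing p A) :
    ∀ r : ℕ, ∀ x : A, Phi hp D x - x ∈ Ideal.span {(p:A)^r} →
    ∃ (n : ℕ) (e : Fin n → A) (c : Fin n → ℤ),
      (∀ i, IsIdempotentElem (e i)) ∧ (∀ i j, i ≠ j → e i * e j = 0) ∧ (∑ i, e i = 1) ∧
      x - ∑ i, (c i : A) * e i ∈ Ideal.span {(p:A)^r} := by
  intro r
  induction r with
  | zero =>
    intro x _
    refine ⟨1, fun _ => 1, fun _ => 0, fun i => mul_one 1, fun i j hij => absurd (Subsingleton.elim i j) hij, by simp, ?_⟩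
    simp [Ideal.span_singleton_one]
  | succ r ih =>
    intro x hx
    obtain ⟨n, e, c, He, Horth, Hsum, Hmem⟩ := ih x (span_le_span (by omega) hx)
    have h2 := hp.two_le
    set s := ∑ i, (c i : A) * e i with hs_def
    have hPhis : Phi hp D s = s := by
      rw [hs_def, map_sum]
      refine Finset.sum_congr rfl (fun i _ => ?_)
      rw [map_mul, map_intCast, Phi_idem hp hA D (He i).eq]
    obtain ⟨u, hu⟩ := Ideal.mem_span_singleton.mp Hmem
    -- congruence framework
    set P : A → Prop := fun t => (p:A)^r * t ∈ Ideal.span {(p:A)^(r+1)} with hP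
    have Pp : ∀ {t}, t ∈ Ideal.span {(p:A)} → P t := by
      intro t ht
      obtain ⟨w, hw⟩ := Ideal.mem_span_singleton.mp ht
      simp only [hP, hw]
      exact Ideal.mem_span_singleton.mpr ⟨w, by ring⟩
    have Padd : ∀ {t t'}, P t → P t' → P (t + t') := by
      intro t t' h h'
      simp only [hP, mul_add] at *
      exact add_mem h h'
    have Psub : ∀ {t t'}, P t → P t' → P (t - t') := by
      intro t t' h h'
      simp only [hP, mul_sub] at *
      exact sub_mem h h'
    have Pmul : ∀ (z : A) {t}, P t → P (z * t) := by
      intro z t h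
      simp only [hP] at *
      have h9 : (p:A)^r * (z * t) = z * ((p:A)^r * t) := by ring
      rw [h9]
      exact Ideal.mul_mem_left _ _ h
    have Pext : ∀ {t t' : A}, t = t' → P t' → P t := by
      intro t t' h h'; rw [h]; exact h'
    have Psum : ∀ (f : Fin p → A), (∀ k, P (f k)) → P (∑ k, f k) := by
      intro f hf
      simp only [hP] at *
      rw [Finset.mul_sum]
      exact Ideal.sum_mem _ (fun k _ => hf k)
    -- the basic congruences
    have hu1 : P (Phi hp D u - u) := by
      have hxu : x = s + (p:A)^r * u := by linear_combination hu
      simp only [hP]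
      have h9 : (p:A)^r * (Phi hp D u - u) = Phi hp D x - x := by
        rw [hxu, map_add, hPhis, map_mul, map_pow, map_natCast]; ring
      rw [h9]
      exact hx
    have hu2 : P (u ^ p - u) := by
      have h9 : u ^ p - u = (Phi hp D u - u) - (p:A) * D.δ u := by rw [Phi_apply]; ring
      rw [h9]
      exact Psub hu1 (Pp (Ideal.mem_span_singleton.mpr ⟨D.δ u, rfl⟩))
    set v : Fin p → A := fun k => u - (k.val : A) with hv
    set g : Fin p → A := fun k => 1 - (v k) ^ (p - 1) with hg
    have hvp : ∀ k, P ((v k) ^ p - v k) := by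
      intro k
      have hm : ((k.val : A)) - ((k.val : A))^p ∈ Ideal.span {(p:A)} := by
        obtain ⟨d, hd⟩ := fermat_nat hp k.val
        have hle := Nat.le_self_pow hp.ne_zero k.val
        have h9 : (k.val : ℕ) ^ p = k.val + p * d := by omega
        have hcast : ((k.val : A))^p = (k.val : A) + (p:A) * (d:A) := by
          exact_mod_cast congrArg (fun m : ℕ => (m : A)) h9
        rw [hcast]
        exact Ideal.mem_span_singleton.mpr ⟨-(d:A), by ring⟩
      have hbin : (u - (k.val:A))^p - (u^p - ((k.val:A))^p) ∈ Ideal.span {(p:A)} := by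
        have h := add_pow_split hp (u - (k.val:A)) ((k.val:A))
        have h' : (u - (k.val:A)) + (k.val:A) = u := by ring
        rw [h'] at h
        have h9 : (u - (k.val:A))^p - (u^p - ((k.val:A))^p)
            = -∑ i ∈ Finset.Ioo 0 p, (p.choose i : A) * (u - (k.val:A)) ^ i * ((k.val:A)) ^ (p - i) := by
          linear_combination -h
        rw [h9]
        refine neg_mem (Ideal.sum_mem _ (fun i hi => ?_))
        rw [Finset.mem_Ioo] at hi
        obtain ⟨d, hd⟩ := hp.dvd_choose_self (by omega : i ≠ 0) hi.2
        have hchoose : ((p.choose i : ℕ) : A) ∈ Ideal.span {(p:A)} :=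
          Ideal.mem_span_singleton.mpr ⟨(d:A), by rw [hd]; push_cast; ring⟩
        exact Ideal.mul_mem_right _ _ (Ideal.mul_mem_right _ _ hchoose)
      have h9 : (v k)^p - v k = ((u - (k.val:A))^p - (u^p - ((k.val:A))^p))
          + (u^p - u) + ((k.val:A) - ((k.val:A))^p) := by
        simp only [hv]; ring
      rw [h9]
      exact Padd (Padd (Pp hbin) hu2) (Pp hm)
    have hgg : ∀ k, P (g k * g k - g k) := by
      intro k
      have h9 : g k * g k - g k = (v k) ^ (p - 2) * ((v k)^p - v k) := by
        simp only [hg]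
        have e1 : (p-1) + (p-1) = (p-2) + p := by omega
        have e2 : p - 1 = (p-2) + 1 := by omega
        calc (1 - v k ^ (p-1)) * (1 - v k ^ (p-1)) - (1 - v k ^ (p-1))
            = v k ^ ((p-1)+(p-1)) - v k ^ (p-1) := by rw [pow_add]; ring
          _ = v k ^ ((p-2) + p) - v k ^ ((p-2)+1) := by rw [← e1, ← e2]
          _ = v k ^ (p-2) * (v k ^ p - v k) := by rw [pow_add, pow_add, pow_one]; ring
      rw [h9]
      exact Pmul _ (hvp k)
    have hvg : ∀ k, P (v k * g k) := by
      intro k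
      have hvpow : v k * (v k)^(p-1) = (v k)^p := by
        rw [← pow_succ']
        congr 1
        omega
      have h9 : v k * g k = -((v k)^p - v k) := by
        simp only [hg]
        rw [mul_sub, mul_one, hvpow]
        ring
      rw [h9]
      exact Pext (by ring : -((v k)^p - v k) = (-1 : A) * ((v k)^p - v k)) (Pmul (-1) (hvp k))
    -- exact idempotents q k
    have hq : ∀ k : Fin p, ∃ q : A, q * q = q ∧ P (q - g k) := by
      intro k
      have hν : ((g k * g k - g k)) ^ (p^r) ∈ Ideal.span {(p:A)} := tors hp hA D r _ (hgg k)
      obtain ⟨b, hb1, hb2⟩ := improve_idem (M := p^r)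
        (Nat.one_le_iff_ne_zero.mpr (pow_ne_zero r hp.ne_zero)) hν
      obtain ⟨q, hq1, hq2⟩ := lift_idem hp hA hb1
      refine ⟨q, hq1, ?_⟩
      have hPbg : P (b - g k) := by
        obtain ⟨w, hw⟩ := Ideal.mem_span_singleton.mp hb2
        simp only [hP, hw]
        have h9 : (p:A)^r * ((g k * g k - g k) * w) = ((p:A)^r * (g k * g k - g k)) * w := by
          ring
        rw [h9]
        exact Ideal.mul_mem_right _ _ (hgg k)
      exact Pext (by ring : q - g k = (q - b) + (b - g k)) (Padd (Pp hq2) hPbg)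
    choose q hqidem hqcong using hq
    -- orthogonality mod P
    have horthP : ∀ k l : Fin p, k ≠ l → P (g k * g l) := by
      intro k l hkl
      have hvalne : k.val ≠ l.val := fun h => hkl (Fin.ext h)
      have hcop : IsCoprime ((l.val : ℤ) - (k.val : ℤ)) (p : ℤ) := by
        rw [Int.isCoprime_iff_gcd_eq_one]
        have hlt : ((l.val:ℤ) - (k.val:ℤ)).natAbs < p := by
          have := l.isLt; have := k.isLt; omega
        have hne0 : ((l.val:ℤ) - (k.val:ℤ)).natAbs ≠ 0 := by omega
        have hnd : ¬ p ∣ ((l.val:ℤ) - (k.val:ℤ)).natAbs :=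
          Nat.not_dvd_of_pos_of_lt (by omega) hlt
        have hc := (Nat.Prime.coprime_iff_not_dvd hp).mpr hnd
        have : Int.gcd ((l.val:ℤ) - (k.val:ℤ)) (p:ℤ)
            = Nat.gcd ((l.val:ℤ) - (k.val:ℤ)).natAbs p := by
          unfold Int.gcd
          simp
        rw [this]
        exact Nat.coprime_comm.mp hc
      obtain ⟨α, β, hαβ⟩ := hcop
      have hcastαβ : (α:A) * ((l.val:A) - (k.val:A)) + (β:A)*(p:A) = 1 := by
        have h9 := congrArg (fun z : ℤ => (z : A)) hαβ
        push_cast at h9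
        linear_combination h9
      have hsplit2 : g k * g l = (α:A) * (g l * (v k * g k)) - (α:A) * (g k * (v l * g l))
          + (β:A) * ((p:A) * (g k * g l)) := by
        have h9 : v k - v l = (l.val:A) - (k.val:A) := by simp only [hv]; ring
        have h10 : (α:A) * (v k - v l) + (β:A)*(p:A) = 1 := by rw [h9]; exact hcastαβ
        linear_combination (-(g k * g l)) * h10
      refine Pext hsplit2 (Padd (Psub (Pmul _ (Pmul _ (hvg k))) (Pmul _ (Pmul _ (hvg l)))) (Pmul _ (Pp (Ideal.mem_span_singleton.mpr ⟨g k * g l, rfl⟩))))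
    have horthq : ∀ k l : Fin p, k ≠ l → q k * q l = 0 := by
      intro k l hkl
      have hidem : (q k * q l) * (q k * q l) = q k * q l := by
        have h9 : (q k * q l) * (q k * q l) = (q k * q k) * (q l * q l) := by ring
        rw [h9, hqidem k, hqidem l]
      refine idem_tors_zero hp hA D (r := r) hidem ?_
      have hPq : P (q k * q l) := by
        refine Pext (by ring : q k * q l = (q k * (q l - g l) + g l * (q k - g k)) + g k * g l)
          (Padd (Padd (Pmul _ (hqcong l)) (Pmul _ (hqcong k))) (horthP k l hkl))
      simpa only [hP] using hPq
    -- the sum of the q's is 1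
    set S : A := ∑ k, q k with hS_def
    have hSq : ∀ a : Fin p, S * q a = q a := by
      intro a
      rw [hS_def, Finset.sum_mul]
      rw [Finset.sum_eq_single a (fun l _ hla => horthq l a hla) (fun h => absurd (Finset.mem_univ a) h)]
      exact hqidem a
    have h1S : (1 - S) * (1 - S) = 1 - S := by
      have hSS : S * S = S := by
        rw [hS_def, Finset.mul_sum]
        refine Finset.sum_congr rfl (fun a _ => hSq a)
      linear_combination hSS
    have hprod1 : ∀ t : Finset (Fin p), (1 - S) * ∏ k ∈ t, (1 - q k) = 1 - S := by
      intro t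
      induction t using Finset.induction_on with
      | empty => simp
      | @insert a t hnotmem ihh =>
        rw [Finset.prod_insert hnotmem]
        have hstep : (1 - S) * (1 - q a) = 1 - S := by linear_combination hSq a
        calc (1 - S) * ((1 - q a) * ∏ k ∈ t, (1 - q k))
            = ((1 - S) * (1 - q a)) * ∏ k ∈ t, (1 - q k) := by ring
          _ = (1 - S) * ∏ k ∈ t, (1 - q k) := by rw [hstep]
          _ = 1 - S := ihh
    have hprodcong : ∀ t : Finset (Fin p),
        P ((∏ k ∈ t, (1 - q k)) - ∏ k ∈ t, (v k) ^ (p-1)) := by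
      intro t
      induction t using Finset.induction_on with
      | empty =>
        simp only [Finset.prod_empty, sub_self]
        simp only [hP, mul_zero]
        exact zero_mem _
      | @insert a t hnotmem ihh =>
        rw [Finset.prod_insert hnotmem, Finset.prod_insert hnotmem]
        refine Pext (?_ :
            (1 - q a) * (∏ k ∈ t, (1 - q k)) - (v a)^(p-1) * ∏ k ∈ t, (v k)^(p-1)
            = (1 - q a) * ((∏ k ∈ t, (1 - q k)) - ∏ k ∈ t, (v k)^(p-1))
              + (∏ k ∈ t, (v k)^(p-1)) * (g a - q a)) ?_
        · simp only [hg]; ring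
        · refine Padd (Pmul _ ihh) (Pmul _ ?_)
          exact Pext (by ring : g a - q a = (-1:A) * (q a - g a)) (Pmul (-1) (hqcong a))
    -- product of all v's is P-trivial
    have hPu : P (∏ k : Fin p, v k) := by
      have hpr := prod_range_sub_mem hp u
      have hconv : ∏ k : Fin p, v k = ∏ c' ∈ Finset.range p, (u - (c' : A)) := by
        simp only [hv]
        exact Fin.prod_univ_eq_prod_range (fun c' => u - (c' : A)) p
      refine Pext (?_ : ∏ k : Fin p, v k
          = ((∏ c' ∈ Finset.range p, (u - (c':A))) - (u^p - u)) + (u^p - u)) ?_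
      · rw [hconv]; ring
      · exact Padd (Pp hpr) hu2
    have hPvprod : P (∏ k : Fin p, (v k) ^ (p-1)) := by
      rw [Finset.prod_pow]
      refine Pext (?_ : (∏ k : Fin p, v k) ^ (p-1)
          = (∏ k : Fin p, v k) ^ (p-2) * ∏ k : Fin p, v k) ?_
      · rw [← pow_succ]; congr 1; omega
      · exact Pmul _ hPu
    -- 1 - S is P-trivial, hence S = 1
    have hP1S : P (1 - S) := by
      refine Pext (?_ : 1 - S
          = (1 - S) * ((∏ k : Fin p, (1 - q k)) - ∏ k : Fin p, (v k)^(p-1))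
            + (1 - S) * ∏ k : Fin p, (v k)^(p-1)) ?_
      · have h9 : (1 - S) * ((∏ k : Fin p, (1 - q k)) - ∏ k : Fin p, (v k)^(p-1))
            + (1 - S) * ∏ k : Fin p, (v k)^(p-1)
            = (1 - S) * ∏ k : Fin p, (1 - q k) := by ring
        rw [h9, hprod1]
      · exact Padd (Pmul _ (hprodcong Finset.univ)) (Pmul _ hPvprod)
    have hSone : S = 1 := by
      have := idem_tors_zero hp hA D (r := r) h1S (by simpa only [hP] using hP1S)
      linear_combination -this
    -- value congruence
    have hvq : ∀ k, P (v k * q k) := by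
      intro k
      exact Pext (by ring : v k * q k = v k * (q k - g k) + v k * g k)
        (Padd (Pmul _ (hqcong k)) (hvg k))
    have hval : P (u - ∑ k : Fin p, (k.val : A) * q k) := by
      refine Pext (?_ : u - ∑ k : Fin p, (k.val : A) * q k = ∑ k : Fin p, v k * q k) ?_
      · have h6 : ∑ k : Fin p, v k * q k
            = ∑ k : Fin p, (u * q k - (k.val:A) * q k) := by
          refine Finset.sum_congr rfl (fun k _ => ?_)
          simp only [hv]; ring
        rw [h6, Finset.sum_sub_distrib, ← Finset.mul_sum, ← hS_def, hSone, mul_one]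
      · exact Psum _ hvq
    -- final assembly
    refine ⟨n * p, fun j => e (finProdFinEquiv.symm j).1 * q (finProdFinEquiv.symm j).2,
        fun j => c (finProdFinEquiv.symm j).1 + (p:ℤ)^r * ((finProdFinEquiv.symm j).2.val : ℤ),
        ?_, ?_, ?_, ?_⟩
    · intro j
      show _ * _ = _
      rw [mul_mul_mul_comm, (He _).eq, hqidem _]
    · intro j j' hjj
      have hne : (finProdFinEquiv.symm j) ≠ (finProdFinEquiv.symm j') := by
        intro h
        exact hjj (finProdFinEquiv.symm.injective h)
      rw [mul_mul_mul_comm]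
      by_cases hii : (finProdFinEquiv.symm j).1 = (finProdFinEquiv.symm j').1
      · have hkk : (finProdFinEquiv.symm j).2 ≠ (finProdFinEquiv.symm j').2 := by
          intro h
          exact hne (Prod.ext hii h)
        rw [horthq _ _ hkk, mul_zero]
      · rw [Horth _ _ hii, zero_mul]
    · rw [Fintype.sum_equiv finProdFinEquiv.symm _
          (fun x : Fin n × Fin p => e x.1 * q x.2) (fun j => rfl)]
      rw [Fintype.sum_prod_type]
      have h9 : ∀ i, ∑ k : Fin p, e i * q k = e i := by
        intro i
        rw [← Finset.mul_sum, ← hS_def, hSone, mul_one]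
      rw [Finset.sum_congr rfl (fun i _ => h9 i)]
      exact Hsum
    · have key : ∑ j : Fin (n*p), ((c (finProdFinEquiv.symm j).1
          + (p:ℤ)^r * ((finProdFinEquiv.symm j).2.val : ℤ) : ℤ) : A)
            * (e (finProdFinEquiv.symm j).1 * q (finProdFinEquiv.symm j).2)
          = s + (p:A)^r * ∑ k : Fin p, (k.val : A) * q k := by
        rw [Fintype.sum_equiv finProdFinEquiv.symm _
            (fun x : Fin n × Fin p => ((c x.1 + (p:ℤ)^r * (x.2.val : ℤ) : ℤ) : A)
              * (e x.1 * q x.2)) (fun j => rfl)]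
        rw [Fintype.sum_prod_type]
        have h9 : ∀ i, ∑ k : Fin p, ((c i + (p:ℤ)^r * (k.val : ℤ) : ℤ) : A) * (e i * q k)
            = (c i : A) * e i + (p:A)^r * (∑ k : Fin p, (k.val : A) * q k) * e i := by
          intro i
          have h10 : ∀ k : Fin p, ((c i + (p:ℤ)^r * (k.val : ℤ) : ℤ) : A) * (e i * q k)
              = (c i : A) * e i * q k + (p:A)^r * ((k.val : A) * q k) * e i := by
            intro k
            push_cast
            ring
          rw [Finset.sum_congr rfl (fun k _ => h10 k), Finset.sum_add_distrib]
          congr 1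
          · rw [← Finset.mul_sum, ← hS_def, hSone, mul_one]
          · rw [← Finset.sum_mul, ← Finset.mul_sum]
        rw [Finset.sum_congr rfl (fun i _ => h9 i), Finset.sum_add_distrib, ← hs_def]
        congr 1
        rw [← Finset.mul_sum, Hsum, mul_one]
      rw [key]
      have h11 : x - (s + (p:A)^r * ∑ k : Fin p, (k.val : A) * q k)
          = (p:A)^r * (u - ∑ k : Fin p, (k.val : A) * q k) := by
        linear_combination hu
      rw [h11]
      simpa only [hP] using hval

end ASD

/-- Artin–Schreier for δ_p-rings: if `A` is a p-complete δ_p-ring with Frobenius lift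
`φ(x) = x^p + p·δ_p(x)`, then for every `r`, the fixed points of `φ` on `A/p^r` are
exactly the locally constant `ℤ/p^r`-valued functions on `Spec A`, i.e. the integer
combinations of complete orthogonal families of idempotents of `A`; this expresses
the exactness of `0 → (ℤ/p^r)(A) → A/p^r → A/p^r` with second map `φ − 1`. -/
theorem artin_schreier_delta {p : ℕ} (hp : p.Prime) {A : Type*} [CommRing A]
    (hA : IsAdicComplete (Ideal.span {(p : A)}) A)
    (D : DeltaRing p A) (r : ℕ) :
    ∀ x : A,
      (x ^ p + (p : A) * D.δ x) - x ∈ Ideal.span {(p : A) ^ r} ↔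
      ∃ (n : ℕ) (e : Fin n → A) (c : Fin n → ℤ),
        (∀ i, IsIdempotentElem (e i)) ∧
        (∀ i j, i ≠ j → e i * e j = 0) ∧
        (∑ i, e i = 1) ∧
        x - ∑ i, (c i : A) * e i ∈ Ideal.span {(p : A) ^ r} := by
  intro x
  constructor
  · intro hx
    exact ASD.forward hp hA D r x hx
  · rintro ⟨n, e, c, he, -, -, hmem⟩
    exact ASD.backward hp hA D r e c he x hmem
end

section
/- Let M be a finitely generated abelian group. Then every unit u of the integral group ring Z[M] such that the image of u in Z[M]^∧_p satisfies δ_p(u)=0 for every prime p (with respect to the δ_p-structure with Frobenius lift [m] ↦ [pm]) is of the form [m] for some m ∈ M. Equivalently, the group of such units is isomorphic to M. -/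
/-- Multiplication by `q` as an additive monoid homomorphism. -/
def pMul (q : ℕ) (M : Type*) [AddCommGroup M] : M →+ M :=
  AddMonoidHom.mk' (fun m => q • m) (fun a b => smul_add q a b)

/-- For a prime `q`, the Frobenius lift `Σ a_m[m] ↦ Σ a_m[q•m]` on the integral group
ring `ℤ[M]`. -/
noncomputable def frobLift (q : ℕ) (M : Type*) [AddCommGroup M] :
    AddMonoidAlgebra ℤ M →+* AddMonoidAlgebra ℤ M :=
  AddMonoidAlgebra.mapDomainRingHom ℤ (pMul q M)

/-!
Push `u` along `M → Q := M ⧸ N • M`, with `N` chosen (by the structure theorem) so that the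
support of `u` maps injectively. The Frobenius lift `φ_0` is the augmentation, and
`φ_0 = φ_0 ∘ φ_2` makes `φ_0 u` an idempotent unit, hence `1`; since `N` kills `Q`, the image
`v` satisfies `v ^ N = φ_N v = φ_0 v = 1`.

Higman's argument then gives `‖v‖² := Σ v_g² = 1`: for `w = v v*` and `B = Σ_{k<e} w^k` one has
`B² = e B` and `B* = B`, so `B_0² ≤ ‖B‖² = (B B*)_0 = e B_0`, i.e. `Σ_{k<e} ‖v^k‖² = B_0 ≤ e`,
while every term is at least `1`. As the support of `u` injects into `Q`, `‖u‖² = ‖v‖² = 1`,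
so `u = c [m]`, and the augmentation forces `c = 1`.
-/

open AddMonoidAlgebra

section Frobenius

variable {M M' : Type*} [AddCommGroup M] [AddCommGroup M']

lemma frobLift_apply (q : ℕ) (x : ℤ[M]) : frobLift q M x = mapDomain (q • ·) x := rfl

lemma frobLift_mul (a b : ℕ) (x : ℤ[M]) :
    frobLift (a * b) M x = frobLift a M (frobLift b M x) := by
  simp only [frobLift_apply, mapDomain, ← Finsupp.mapDomain_comp]
  congr
  funext m
  simp [mul_smul]

lemma frobLift_one (x : ℤ[M]) : frobLift 1 M x = x := by
  rw [frobLift_apply, mapDomain]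
  simp only [one_smul]
  exact congrArg ofCoeff Finsupp.mapDomain_id

lemma frobLift_zero_single (m : M) (c : ℤ) : frobLift 0 M (single m c) = single 0 c := by
  simp [frobLift_apply, mapDomain_single]

lemma frobLift_eq_frobLift_zero {N : ℕ} (hN : ∀ c : M, N • c = 0) (x : ℤ[M]) :
    frobLift N M x = frobLift 0 M x := by
  simp only [frobLift_apply, hN, zero_smul]

lemma mapDomainRingHom_frobLift (g : M →+ M') (n : ℕ) (x : ℤ[M]) :
    mapDomainRingHom ℤ g (frobLift n M x) = frobLift n M' (mapDomainRingHom ℤ g x) := by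
  simp only [frobLift_apply, mapDomainRingHom_apply, mapDomain, ← Finsupp.mapDomain_comp]
  congr
  funext m
  simp

lemma frobLift_eq_pow_of_forall_prime {x : ℤ[M]}
    (h : ∀ q : ℕ, q.Prime → frobLift q M x = x ^ q) {n : ℕ} (hn : n ≠ 0) :
    frobLift n M x = x ^ n := by
  induction n using Nat.recOnMul with
  | zero => exact absurd rfl hn
  | one => rw [frobLift_one, pow_one]
  | prime p hp => exact h p hp
  | mul a b iha ihb =>
    rw [frobLift_mul, ihb (right_ne_zero_of_mul hn), map_pow, iha (left_ne_zero_of_mul hn),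
      ← pow_mul, mul_comm]

lemma frobLift_zero_eq_one {x : ℤ[M]} (hx : IsUnit x) (h2 : frobLift 2 M x = x ^ 2) :
    frobLift 0 M x = 1 := by
  refine (IsIdempotentElem.iff_eq_one_of_isUnit (hx.map (frobLift 0 M))).mp ?_
  rw [IsIdempotentElem, ← map_mul, ← sq, ← h2, ← frobLift_mul]

end Frobenius

section NormSq

variable {G : Type*}

def normSq (x : ℤ[G]) : ℤ := x.coeff.sum fun _ c => c ^ 2

lemma sq_coeff_le_normSq (x : ℤ[G]) (a : G) : x.coeff a ^ 2 ≤ normSq x := by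
  by_cases ha : a ∈ x.coeff.support
  · exact Finset.single_le_sum (f := fun a => x.coeff a ^ 2) (fun b _ => sq_nonneg _) ha
  · rw [Finsupp.notMem_support_iff.mp ha, zero_pow two_ne_zero]
    exact Finset.sum_nonneg fun b _ => sq_nonneg _

lemma one_le_sq_coeff {x : ℤ[G]} {a : G} (ha : a ∈ x.coeff.support) : 1 ≤ x.coeff a ^ 2 :=
  (one_le_sq_iff_one_le_abs _).mpr (Int.one_le_abs (Finsupp.mem_support_iff.mp ha))

lemma one_le_normSq {x : ℤ[G]} (hx : x ≠ 0) : 1 ≤ normSq x := by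
  obtain ⟨a, ha⟩ := Finsupp.support_nonempty_iff.mpr (coeff_eq_zero.not.mpr hx)
  exact (one_le_sq_coeff ha).trans (sq_coeff_le_normSq x a)

lemma exists_eq_single_of_normSq_eq_one {x : ℤ[G]} (hx : normSq x = 1) :
    ∃ m c, x = single m c := by
  have hx0 : x ≠ 0 := by
    rintro rfl
    simp [normSq] at hx
  have hcard : x.coeff.support.card ≤ 1 := by
    have := Finset.card_nsmul_le_sum x.coeff.support (fun a => x.coeff a ^ 2) 1
      fun a ha => one_le_sq_coeff ha
    rw [nsmul_one] at this
    exact_mod_cast this.trans hx.le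
  obtain ⟨m, hm⟩ := Finset.card_eq_one.mp <| le_antisymm hcard <|
    Finset.card_pos.mpr (Finsupp.support_nonempty_iff.mpr (coeff_eq_zero.not.mpr hx0))
  exact ⟨m, x.coeff m, coeff_injective (Finsupp.support_eq_singleton.mp hm).2⟩

lemma normSq_mapDomain_of_injOn {G' : Type*} {g : G → G'} {x : ℤ[G]}
    (hg : Set.InjOn g x.coeff.support) : normSq (mapDomain g x) = normSq x := by
  classical
  rw [normSq, mapDomain, coeff_ofCoeff, Finsupp.sum, Finsupp.mapDomain_support_of_injOn _ hg,
    Finset.sum_image hg]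
  exact Finset.sum_congr rfl fun a ha =>
    by rw [Finsupp.mapDomain_apply' _ _ subset_rfl hg ha]

end NormSq

section Antipode

open HopfAlgebra

variable {Q : Type*} [AddCommGroup Q]

local notation "σ" => antipodeAlgHom ℤ ℤ[Q]

lemma antipode_antipode (x : ℤ[Q]) : σ (σ x) = x := by
  induction x using induction_linear with
  | zero => simp
  | add x y hx hy => rw [map_add, map_add, hx, hy]
  | single m c => simp

lemma coeff_zero_mul_antipode (x y : ℤ[Q]) :
    (x * σ y).coeff 0 = y.coeff.sum fun a c => x.coeff a * c := by
  induction y using induction_linear with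
  | zero => simp
  | add y z hy hz =>
    rw [map_add, mul_add, coeff_add, Finsupp.add_apply, hy, hz, coeff_add,
      Finsupp.sum_add_index' (fun a => mul_zero _) (fun a => mul_add _)]
  | single m c => simp [coeff_mul_single_apply]

lemma coeff_zero_mul_antipode_self (x : ℤ[Q]) : (x * σ x).coeff 0 = normSq x :=
  (coeff_zero_mul_antipode x x).trans (Finset.sum_congr rfl fun _ _ => (sq _).symm)

lemma coeff_zero_geom_sum_le {w : ℤ[Q]} {e : ℕ} (hw : w ^ e = 1) (hsymm : σ w = w) :
    (∑ k ∈ Finset.range e, w ^ k).coeff 0 ≤ e := by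
  set B := ∑ k ∈ Finset.range e, w ^ k
  have hBw : B * w = B := by
    have := geom_sum_mul w e
    rwa [hw, sub_self, mul_sub, mul_one, sub_eq_zero] at this
  have hBwk (k : ℕ) : B * w ^ k = B := by
    induction k with
    | zero => rw [pow_zero, mul_one]
    | succ k ih => rw [pow_succ, ← mul_assoc, ih, hBw]
  have hsymmB : σ B = B := by
    simp only [B, map_sum, map_pow, hsymm]
  have hBB : B * σ B = e • B := by
    rw [hsymmB]
    calc B * B = ∑ k ∈ Finset.range e, B * w ^ k := Finset.mul_sum _ _ _
      _ = e • B := by simp only [hBwk, Finset.sum_const, Finset.card_range]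
  have hsq := sq_coeff_le_normSq B 0
  rw [← coeff_zero_mul_antipode_self, hBB, coeff_smul_apply, nsmul_eq_mul] at hsq
  nlinarith

lemma normSq_eq_one_of_pow_eq_one {x : ℤ[Q]} {e : ℕ} (hx : x ^ e = 1) (he : e ≠ 0) :
    normSq x = 1 := by
  set w := x * σ x
  have hwk (k : ℕ) : (w ^ k).coeff 0 = normSq (x ^ k) := by
    rw [mul_pow, ← map_pow, coeff_zero_mul_antipode_self]
  have hpos (k : ℕ) : 1 ≤ (w ^ k).coeff 0 :=
    hwk k ▸ one_le_normSq ((IsUnit.of_pow_eq_one hx he).pow k).ne_zero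
  have hw : w ^ (2 * e) = 1 := by
    rw [mul_pow, ← map_pow, pow_mul', hx, one_pow, map_one, one_mul]
  have hsum := coeff_zero_geom_sum_le hw (by rw [map_mul, antipode_antipode, mul_comm])
  -- The period `2 * e` makes sure that the term `k = 1` occurs in the geometric sum.
  have hle := Finset.single_le_sum (f := fun k => (w ^ k).coeff 0 - 1)
    (fun k _ => sub_nonneg.mpr (hpos k)) (Finset.mem_range.mpr (by omega : 1 < 2 * e))
  rw [Finset.sum_sub_distrib, ← Finset.sum_apply', ← coeff_sum] at hle
  simp only [Finset.sum_const, Finset.card_range, nsmul_one] at hle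
  have h1 : (w ^ 1).coeff 0 = normSq x := by rw [hwk, pow_one]
  have := hpos 1
  push_cast at hsum hle
  omega

end Antipode

section Separation

variable {M : Type*} [AddCommGroup M]

lemma Finsupp.exists_nsmul_eq_imp_eq_zero {ι : Type*} (a : ι →₀ ℤ) :
    ∃ N ≠ 0, ∀ z : ι →₀ ℤ, N • z = a → a = 0 := by
  by_cases ha : a = 0
  · exact ⟨1, one_ne_zero, fun _ _ => ha⟩
  obtain ⟨i, hi⟩ := Finsupp.support_nonempty_iff.mpr ha
  refine ⟨(a i).natAbs + 1, by omega, fun z hz => absurd ?_ (Finsupp.mem_support_iff.mp hi)⟩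
  have hzi := Finsupp.ext_iff.mp hz i
  rw [Finsupp.smul_apply] at hzi
  refine Int.eq_zero_of_dvd_of_natAbs_lt_natAbs (d := ((a i).natAbs + 1 : ℕ)) ⟨z i, ?_⟩
    (by rw [Int.natAbs_natCast]; omega)
  rw [← nsmul_eq_mul, hzi]

lemma AddGroup.FG.exists_nsmul_eq_imp_eq_zero (hfg : AddGroup.FG M) (d : M) :
    ∃ N ≠ 0, ∀ y : M, N • y = d → d = 0 := by
  obtain ⟨n, ι, _, p, hp, e, ⟨f⟩⟩ := AddCommGroup.equiv_free_prod_directSum_zmod M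
  set T := DirectSum ι fun i => ZMod (p i ^ e i)
  have : ∀ i, NeZero (p i ^ e i) := fun i => ⟨pow_ne_zero _ (hp i).ne_zero⟩
  have : Finite T := Finite.of_equiv _ (DFinsupp.equivFunOnFintype (ι := ι)).symm
  obtain ⟨N, hN, hfree⟩ := (f d).1.exists_nsmul_eq_imp_eq_zero
  refine ⟨N * Nat.card T, mul_ne_zero hN Nat.card_pos.ne', fun y hy => ?_⟩
  have hfy : f d = (N * Nat.card T) • f y := by rw [← map_nsmul, hy]
  have hfree_part : (f d).1 = 0 :=
    hfree (Nat.card T • (f y).1) (by rw [hfy, Prod.smul_fst, mul_smul])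
  have htors_part : (f d).2 = 0 := by
    rw [hfy, Prod.smul_snd, mul_comm, mul_smul, card_nsmul_eq_zero']
  exact f.map_eq_zero_iff.mp (Prod.ext hfree_part htors_part)

lemma AddGroup.FG.exists_injOn_mk_range_pMul (hfg : AddGroup.FG M) (S : Finset M) :
    ∃ N ≠ 0, Set.InjOn (QuotientAddGroup.mk' (pMul N M).range) S := by
  choose N hN0 hN using hfg.exists_nsmul_eq_imp_eq_zero
  refine ⟨∏ a ∈ S, ∏ b ∈ S, N (a - b),
    Finset.prod_ne_zero_iff.mpr fun a _ => Finset.prod_ne_zero_iff.mpr fun b _ => hN0 _,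
    fun a ha b hb hab => ?_⟩
  obtain ⟨y, hy⟩ := (QuotientAddGroup.eq_iff_sub_mem).mp hab.symm
  obtain ⟨k, hk⟩ := (Finset.dvd_prod_of_mem (fun b' => N (b - b')) ha).trans
    (Finset.dvd_prod_of_mem (fun a' => ∏ b' ∈ S, N (a' - b')) hb)
  refine (sub_eq_zero.mp (hN (b - a) (k • y) ?_)).symm
  rw [← mul_smul, ← hk]
  exact hy

lemma nsmul_mk_range_pMul (N : ℕ) (c : M ⧸ (pMul N M).range) : N • c = 0 := by
  induction c using QuotientAddGroup.induction_on with
  | H m => exact (QuotientAddGroup.eq_zero_iff _).mpr ⟨m, rfl⟩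

end Separation

/-- Let `M` be a finitely generated abelian group.  Every unit `u` of `ℤ[M]` whose image
in each `p`-completion `ℤ[M]^∧_p` is killed by `δ_p` — equivalently (since these
completions are `p`-torsion free), `φ_p(u) = u^p` for every prime `p`, where `φ_p` is
the Frobenius lift `[m] ↦ [p•m]` — is of the form `[m]` for a unique `m ∈ M`.
Equivalently, the group of such units is isomorphic to `M`. -/
theorem rankOneHatDeltaUnits_eq_group {M : Type*} [AddCommGroup M] (hfg : AddGroup.FG M) :
    ∀ u : (AddMonoidAlgebra ℤ M)ˣ,
      (∀ q : ℕ, q.Prime →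
        frobLift q M (u : AddMonoidAlgebra ℤ M) = (u : AddMonoidAlgebra ℤ M) ^ q) →
      ∃! m : M, (u : AddMonoidAlgebra ℤ M) = AddMonoidAlgebra.single m 1 := by
  intro u hu
  have haug : frobLift 0 M u = 1 := frobLift_zero_eq_one u.isUnit (hu 2 Nat.prime_two)
  obtain ⟨N, hN, hinj⟩ := hfg.exists_injOn_mk_range_pMul (u : ℤ[M]).coeff.support
  set π := mapDomainRingHom ℤ (QuotientAddGroup.mk' (pMul N M).range)
  have hpow : π u ^ N = 1 := by
    rw [← map_pow, ← frobLift_eq_pow_of_forall_prime hu hN, mapDomainRingHom_frobLift,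
      frobLift_eq_frobLift_zero (nsmul_mk_range_pMul N), ← mapDomainRingHom_frobLift, haug,
      map_one]
  have hnorm : normSq (u : ℤ[M]) = 1 :=
    (normSq_mapDomain_of_injOn hinj).symm.trans (normSq_eq_one_of_pow_eq_one hpow hN)
  obtain ⟨m, c, hmc⟩ := exists_eq_single_of_normSq_eq_one hnorm
  obtain rfl : c = 1 := by
    rw [hmc, frobLift_zero_single, one_def] at haug
    exact single_right_inj.mp haug
  exact ⟨m, hmc, fun m' hm' => single_left_injective one_ne_zero (hm'.symm.trans hmc)⟩
end

section
/- Let R be a reduced commutative ring and Λ a finitely generated free abelian group. Then every unit of the Laurent group ring R[Λ] which maps to 1 under the augmentation R[Λ] → R is, Zariski-locally on Spec R, of the form [λ] for some λ ∈ Λ. In particular, if R is a reduced connected commutative ring, the units of R[Λ] are exactly the products r·[λ] with r ∈ R^× and λ ∈ Λ. -/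
/-!
Modulo a prime `p` of `R`, a unit of `R[Λ]` becomes a unit of `(R ⧸ p)[Λ]`, a group ring over a
domain of a group with two unique sums (`Λ ≅ ℤ^(ι)`), and such units are monomials. So the product
of two distinct coefficients of a unit `u` lies in every prime, hence vanishes as `R` is reduced.
Then `u_λ * ε(u) = u_λ ^ 2` for the augmentation `ε(u) = ∑ u_λ`, a unit of `R`, so each
`u_λ * ε(u)⁻¹` is idempotent: the `u_λ` form a complete orthogonal family of idempotents when
`ε(u) = 1`, and when `R` is connected only one of them is nonzero.
-/

/-- The augmentation ring homomorphism of a group algebra, sending `single m a` to `a`. -/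
noncomputable def augmentation (A : Type*) [CommRing A] (M : Type*) [AddCommGroup M] :
    AddMonoidAlgebra A M →+* A :=
  ((AddMonoidAlgebra.lift A A M) 1).toRingHom

open AddMonoidAlgebra Finset

instance Module.Free.twoUniqueSums_of_int (Λ : Type*) [AddCommGroup Λ] [Module.Free ℤ Λ] :
    TwoUniqueSums Λ :=
  (Module.Free.chooseBasis ℤ Λ).repr.toAddEquiv.twoUniqueSums_iff.mpr inferInstance

theorem IsReduced.eq_zero_of_forall_mem_of_isPrime {R : Type*} [CommRing R] [IsReduced R] {x : R}
    (h : ∀ p : Ideal R, p.IsPrime → x ∈ p) : x = 0 := by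
  have : x ∈ nilradical R := by
    rw [nilradical_eq_sInf]
    exact Ideal.mem_sInf.2 fun {p} hp => h p hp
  rwa [nilradical_eq_zero, Ideal.zero_eq_bot, Ideal.mem_bot] at this

theorem Finset.sum_equivFin_symm {α M : Type*} [AddCommMonoid M] (s : Finset α) (f : α → M) :
    ∑ i, f (s.equivFin.symm i) = ∑ a ∈ s, f a := by
  rw [Equiv.sum_comp s.equivFin.symm (fun a : s => f a), Finset.sum_coe_sort]

theorem augmentation_eq_sum {R G : Type*} [CommRing R] [AddCommGroup G]
    (x : AddMonoidAlgebra R G) : augmentation R G x = x.coeff.sum fun _ r => r := by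
  simp [augmentation, lift_apply]

namespace AddMonoidAlgebra

theorem exists_eq_single_of_mul_eq_one {k G : Type*} [Semiring k] [NoZeroDivisors k]
    [AddMonoid G] [TwoUniqueSums G] {u v : AddMonoidAlgebra k G} (h : u * v = 1) :
    ∃ a r, u = single a r := by
  nontriviality AddMonoidAlgebra k G
  have hv : v.coeff.support.Nonempty := by
    rw [Finsupp.support_nonempty_iff, Ne, coeff_eq_zero]
    rintro rfl
    simp at h
  -- A sum reached in exactly one way carries a nonzero coefficient of `u * v = 1`, so it is `0`.
  have key : ∀ p ∈ u.coeff.support ×ˢ v.coeff.support,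
      UniqueAdd u.coeff.support v.coeff.support p.1 p.2 → p.1 + p.2 = 0 := by
    rintro ⟨a, b⟩ hab hu
    rw [Finset.mem_product, Finsupp.mem_support_iff, Finsupp.mem_support_iff] at hab
    by_contra hne
    have := coeff_mul_add_of_uniqueAdd hu
    rw [h, one_def, coeff_single, Finsupp.single_eq_of_ne hne] at this
    exact mul_ne_zero hab.1 hab.2 this.symm
  suffices #u.coeff.support ≤ 1 by
    obtain ⟨a, r, hr⟩ := Finsupp.card_support_le_one'.1 this
    exact ⟨a, r, by ext1; exact hr⟩
  by_contra! hu
  obtain ⟨p, hp, q, hq, hpq, hup, huq⟩ := TwoUniqueSums.uniqueAdd_of_one_lt_card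
    (hu.trans_le (Nat.le_mul_of_pos_right _ hv.card_pos))
  have hq' := Finset.mem_product.1 hq
  exact hpq (Prod.ext_iff.2 (hup hq'.1 hq'.2 ((key q hq huq).trans (key p hp hup).symm))).symm

variable {R G : Type*} [CommRing R] [IsReduced R]

theorem coeff_mul_coeff_eq_zero_of_isUnit [AddMonoid G] [TwoUniqueSums G]
    {u : AddMonoidAlgebra R G} (hu : IsUnit u) {a b : G} (hab : a ≠ b) :
    u.coeff a * u.coeff b = 0 := by
  classical
  refine IsReduced.eq_zero_of_forall_mem_of_isPrime fun p hp => ?_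
  have : p.IsPrime := hp
  obtain ⟨v, hv⟩ := (hu.map (mapRingHom G (Ideal.Quotient.mk p))).exists_right_inv
  obtain ⟨c, r, hc⟩ := exists_eq_single_of_mul_eq_one hv
  rw [← Ideal.Quotient.eq_zero_iff_mem, map_mul, ← coeff_mapRingHom, ← coeff_mapRingHom, hc,
    coeff_single, Finsupp.single_apply, Finsupp.single_apply]
  split_ifs with ha hb <;> simp_all

variable [AddCommGroup G] [TwoUniqueSums G] {u : AddMonoidAlgebra R G}

theorem coeff_mul_augmentation_of_isUnit (hu : IsUnit u) (a : G) :
    u.coeff a * augmentation R G u = u.coeff a * u.coeff a := by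
  rw [augmentation_eq_sum, Finsupp.mul_sum, Finsupp.sum]
  by_cases ha : a ∈ u.coeff.support
  · exact Finset.sum_eq_single_of_mem a ha fun b _ hba =>
      coeff_mul_coeff_eq_zero_of_isUnit hu hba.symm
  · simp only [Finsupp.notMem_support_iff.1 ha, zero_mul, Finset.sum_const_zero]

theorem exists_completeOrthogonalIdempotents_of_isUnit (hu : IsUnit u)
    (haug : augmentation R G u = 1) :
    ∃ (n : ℕ) (e : Fin n → R) (ls : Fin n → G),
      CompleteOrthogonalIdempotents e ∧ u = ∑ i, single (ls i) (e i) := by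
  set S := u.coeff.support
  refine ⟨#S, fun i => u.coeff (S.equivFin.symm i), fun i => S.equivFin.symm i,
    ⟨⟨fun i => ?_, fun i j hij => ?_⟩, ?_⟩, ?_⟩
  · exact (coeff_mul_augmentation_of_isUnit hu _).symm.trans (by rw [haug, mul_one])
  · exact coeff_mul_coeff_eq_zero_of_isUnit hu
      (Subtype.coe_injective.ne (S.equivFin.symm.injective.ne hij))
  · rw [S.sum_equivFin_symm u.coeff, ← haug, augmentation_eq_sum, Finsupp.sum]
  · rw [S.sum_equivFin_symm fun a => single a (u.coeff a)]
    exact (sum_coeff_single u).symm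

theorem exists_eq_single_of_isUnit (hconn : ∀ e : R, IsIdempotentElem e → e = 0 ∨ e = 1)
    (hu : IsUnit u) : ∃ (r : Rˣ) (l : G), u = single l (r : R) := by
  obtain ⟨a, ha⟩ := hu.map (augmentation R G)
  have hcoeff : ∀ l ∈ u.coeff.support, u.coeff l = a := by
    intro l hl
    have hc := coeff_mul_augmentation_of_isUnit hu l
    rw [← ha] at hc
    have hidem : IsIdempotentElem (u.coeff l * ↑a⁻¹) := by
      rw [IsIdempotentElem, mul_mul_mul_comm, ← hc, mul_assoc, a.mul_inv_cancel_left]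
    rcases hconn _ hidem with h | h
    · exact absurd ((Units.mul_left_eq_zero _).1 h) (Finsupp.mem_support_iff.1 hl)
    · exact Units.mul_inv_eq_one.1 h
  have hcard : #u.coeff.support ≤ 1 := by
    refine Finset.card_le_one.2 fun l hl l' hl' => by_contra fun hne => ?_
    have := coeff_mul_coeff_eq_zero_of_isUnit hu hne
    rw [hcoeff l hl, hcoeff l' hl'] at this
    exact Finsupp.mem_support_iff.1 hl (hcoeff l hl ▸ (Units.mul_left_eq_zero a).1 this)
  obtain ⟨l, r, hr⟩ := Finsupp.card_support_le_one'.1 hcard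
  have hu' : u = single l r := by ext1; exact hr
  refine ⟨a, l, hu'.trans ?_⟩
  rw [ha, hu', augmentation_eq_sum, coeff_single, Finsupp.sum_single_index rfl]

end AddMonoidAlgebra

theorem units_of_laurent_over_reduced_general {R : Type*} [CommRing R] [IsReduced R]
    (Λ : Type*) [AddCommGroup Λ] [Module.Free ℤ Λ] :
    (∀ u : (AddMonoidAlgebra R Λ)ˣ,
      augmentation R Λ (u : AddMonoidAlgebra R Λ) = 1 →
      ∃ (n : ℕ) (e : Fin n → R) (ls : Fin n → Λ),
        (∀ i, IsIdempotentElem (e i)) ∧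
        (∀ i j, i ≠ j → e i * e j = 0) ∧
        (∑ i, e i = 1) ∧
        (u : AddMonoidAlgebra R Λ) = ∑ i, AddMonoidAlgebra.single (ls i) (e i)) ∧
    ((∀ e : R, IsIdempotentElem e → e = 0 ∨ e = 1) →
      ∀ u : (AddMonoidAlgebra R Λ)ˣ,
        ∃ (r : Rˣ) (l : Λ),
          (u : AddMonoidAlgebra R Λ) = AddMonoidAlgebra.single l (r : R)) := by
  refine ⟨fun u haug => ?_, fun hconn u => exists_eq_single_of_isUnit hconn u.isUnit⟩
  obtain ⟨n, e, ls, he, hu⟩ := exists_completeOrthogonalIdempotents_of_isUnit u.isUnit haug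
  exact ⟨n, e, ls, he.idem, fun i j hij => he.ortho hij, he.complete, hu⟩

/-- Let `R` be a reduced commutative ring and `Λ` a finitely generated free abelian
group.  Every unit of `R[Λ]` mapping to `1` under the augmentation is Zariski-locally of
the form `[λ]`: it equals `Σ_i e_i·[λ_i]` for a complete orthogonal family of
idempotents `e_i` of `R` and `λ_i ∈ Λ`.  In particular if `R` is moreover connected
(its only idempotents are `0` and `1`), every unit of `R[Λ]` is `r·[λ]` with `r ∈ Rˣ`,
`λ ∈ Λ`. -/
theorem units_of_laurent_over_reduced {R : Type*} [CommRing R] [IsReduced R]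
    (Λ : Type*) [AddCommGroup Λ] [Module.Free ℤ Λ] [Module.Finite ℤ Λ] :
    (∀ u : (AddMonoidAlgebra R Λ)ˣ,
      augmentation R Λ (u : AddMonoidAlgebra R Λ) = 1 →
      ∃ (n : ℕ) (e : Fin n → R) (ls : Fin n → Λ),
        (∀ i, IsIdempotentElem (e i)) ∧
        (∀ i j, i ≠ j → e i * e j = 0) ∧
        (∑ i, e i = 1) ∧
        (u : AddMonoidAlgebra R Λ) = ∑ i, AddMonoidAlgebra.single (ls i) (e i)) ∧
    ((∀ e : R, IsIdempotentElem e → e = 0 ∨ e = 1) →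
      ∀ u : (AddMonoidAlgebra R Λ)ˣ,
        ∃ (r : Rˣ) (l : Λ),
          (u : AddMonoidAlgebra R Λ) = AddMonoidAlgebra.single l (r : R)) :=
  units_of_laurent_over_reduced_general Λ
end

section
/- Let R be a p-complete commutative ring (discrete) and M a finitely generated abelian group whose torsion subgroup is a p-group. Then the unit map R → R[M]^∧_p induces a bijection between the sets of idempotents of R and of R[M]^∧_p; equivalently, π_0 Spec(R[M]^∧_p) ≅ π_0 Spec(R). -/
/-!
Idempotents are rigid along a Hausdorff ideal `I` (a difference `d` of idempotents satisfies
`d³ = d`, so `d ∈ I` forces `d ∈ ⋂ Iⁿ`) and lift along a complete one (Hensel's lemma for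
`X² - X`). So the idempotents of `B` and `R` are those of `B/p ≅ R[M]/p ≅ (R/p)[M]` and of `R/p`,
and it remains to see that an idempotent `x` of `S[M]` with `p = 0` in `S` is constant. There
`x = xᵖ = ∑ cₘᵖ [p • m]`, so the finite support of `x` lies in its own image under `p •`; hence
`p •` permutes it, and each `m` in it satisfies `pᵏ • m = m` for some `k > 0`, so it is torsion,
hence `p`-power torsion, hence `0`.
-/

theorem IsHausdorff.eq_of_isIdempotentElem_of_mk_eq {R : Type*} [CommRing R] {I : Ideal R}
    [IsHausdorff I R] {e e' : R} (he : IsIdempotentElem e) (he' : IsIdempotentElem e')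
    (h : Ideal.Quotient.mk I e = Ideal.Quotient.mk I e') : e = e' := by
  have hcube : (e - e') * (e - e') * (e - e') = e - e' := by
    linear_combination (e + 1 - 3 * e') * he.eq - (e' + 1 - 3 * e) * he'.eq
  have hpow : ∀ n : ℕ, e - e' ∈ I ^ n := by
    intro n
    induction n with
    | zero => simp
    | succ n ih =>
      rw [← hcube, pow_succ']
      exact Ideal.mul_mem_mul (Ideal.mul_mem_left _ _ (Ideal.Quotient.eq.mp h)) ih
  rw [IsHausdorff.eq_iff_smodEq (I := I)]
  intro n
  rw [SModEq.sub_mem, smul_eq_mul, Ideal.mul_top]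
  exact hpow n

open Polynomial in
theorem HenselianRing.exists_isIdempotentElem_mk_eq {R : Type*} [CommRing R] {I : Ideal R}
    [HenselianRing R I] {s : R ⧸ I} (hs : IsIdempotentElem s) :
    ∃ e : R, IsIdempotentElem e ∧ Ideal.Quotient.mk I e = s := by
  obtain ⟨a, rfl⟩ := Ideal.Quotient.mk_surjective s
  have ha : a ^ 2 - a ∈ I := by
    rw [← Ideal.Quotient.eq_zero_iff_mem, map_sub, map_pow, sq, hs.eq, sub_self]
  -- `(2a - 1)² = 1 + 4 (a² - a)`: the lift `a` is a simple root of `X² - X` modulo `I`.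
  have hunit : IsUnit (Ideal.Quotient.mk I (2 * a - 1)) := by
    refine IsUnit.of_mul_eq_one (Ideal.Quotient.mk I (2 * a - 1)) ?_
    rw [← map_mul, ← map_one (Ideal.Quotient.mk I), Ideal.Quotient.eq]
    convert Ideal.mul_mem_left I 4 ha using 1
    ring
  have hmonic : (X ^ 2 - X : R[X]).Monic := by monicity!
  obtain ⟨e, hroot, hea⟩ := HenselianRing.is_henselian (X ^ 2 - X) hmonic a
    (by simpa using ha) (by simpa [one_add_one_eq_two] using hunit)
  refine ⟨e, ?_, ?_⟩
  · simpa [IsIdempotentElem, sub_eq_zero, sq] using hroot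
  · rwa [Ideal.Quotient.eq]

theorem IsAdicComplete.existsUnique_isIdempotentElem_mk_eq {R : Type*} [CommRing R] {I : Ideal R}
    [IsAdicComplete I R] {s : R ⧸ I} (hs : IsIdempotentElem s) :
    ∃! e : R, IsIdempotentElem e ∧ Ideal.Quotient.mk I e = s := by
  obtain ⟨e, he, rfl⟩ := HenselianRing.exists_isIdempotentElem_mk_eq hs
  exact ⟨e, ⟨he, rfl⟩, fun e' ⟨he', h⟩ => IsHausdorff.eq_of_isIdempotentElem_of_mk_eq he' he h⟩

theorem Finset.subset_zero_of_subset_image_nsmul {M : Type*} [AddCommGroup M] [DecidableEq M]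
    {p : ℕ} (hp : 1 < p) (htor : ∀ m : M, (∃ k : ℕ, k ≠ 0 ∧ k • m = 0) → ∃ n : ℕ, p ^ n • m = 0)
    {T : Finset M} (hT : T ⊆ T.image (p • ·)) : T ⊆ {0} := by
  have himage : T.image (p • ·) = T := (eq_of_subset_of_card_le hT card_image_le).symm
  have hmaps : ∀ m ∈ T, p • m ∈ T := fun m hm => himage ▸ mem_image_of_mem _ hm
  let g : T → T := fun m => ⟨p • m.1, hmaps _ m.2⟩
  have hg : Function.Surjective g := by
    rintro ⟨m, hm⟩
    rw [← himage] at hm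
    obtain ⟨m', hm', rfl⟩ := mem_image.mp hm
    exact ⟨⟨m', hm'⟩, rfl⟩
  intro m hm
  obtain ⟨k, hk, hper⟩ := (Finite.injective_iff_surjective.mpr hg).mem_periodicPts ⟨m, hm⟩
  have hsemiconj : Function.Semiconj Subtype.val g (p • ·) := fun _ => rfl
  have hfix : ∀ j, p ^ (k * j) • m = m := fun j => by
    rw [← smul_iterate_apply]
    exact (hsemiconj.iterate_right _ ⟨m, hm⟩).symm.trans (congrArg _ (hper.mul_const j).eq)
  have hk1 : p ^ k • m = m := by simpa using hfix 1
  obtain ⟨n, hn⟩ := htor m ⟨p ^ k - 1, (Nat.sub_pos_of_lt (Nat.one_lt_pow hk.ne' hp)).ne',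
    by rw [sub_nsmul _ (Nat.one_le_pow _ _ (by omega)), hk1, one_nsmul, add_neg_cancel]⟩
  rw [mem_singleton]
  calc m = p ^ (k * n) • m := (hfix n).symm
    _ = p ^ (k * n - n) • p ^ n • m := by
      rw [smul_smul, ← pow_add, Nat.sub_add_cancel (Nat.le_mul_of_pos_left n hk)]
    _ = 0 := by rw [hn, smul_zero]

namespace AddMonoidAlgebra

theorem support_coeff_pow_char_subset {S M : Type*} [CommSemiring S] [AddCommMonoid M]
    [DecidableEq M] (p : ℕ) [ExpChar S p] (x : AddMonoidAlgebra S M) :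
    (x ^ p).coeff.support ⊆ x.coeff.support.image (p • ·) := by
  have : ExpChar (AddMonoidAlgebra S M) p :=
    expChar_of_injective_algebraMap single_right_injective p
  conv_lhs => rw [← sum_coeff_single x, Finsupp.sum, sum_pow_char]
  simp only [single_pow, coeff_sum, coeff_single]
  refine (Finsupp.support_finsetSum).trans fun m hm => ?_
  obtain ⟨m', hm', hm⟩ := Finset.mem_biUnion.mp hm
  exact Finset.mem_image.mpr
    ⟨m', hm', (Finset.mem_singleton.mp (Finsupp.support_single_subset hm)).symm⟩

theorem eq_single_zero_of_isIdempotentElem {S M : Type*} [CommRing S] [AddCommGroup M]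
    {p : ℕ} (hp : p.Prime) (hpS : (p : S) = 0)
    (htor : ∀ m : M, (∃ k : ℕ, k ≠ 0 ∧ k • m = 0) → ∃ n : ℕ, p ^ n • m = 0)
    {x : AddMonoidAlgebra S M} (hx : IsIdempotentElem x) : x = single 0 (x.coeff 0) := by
  rcases subsingleton_or_nontrivial S with hS | hS
  · exact Subsingleton.elim _ _
  have : CharP S p := (CharP.charP_iff_prime_eq_zero hp).mpr hpS
  have : ExpChar S p := ExpChar.prime hp
  classical
  have hsupp : x.coeff.support ⊆ {0} := by
    refine Finset.subset_zero_of_subset_image_nsmul hp.one_lt htor ?_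
    simpa only [hx.pow_eq hp.ne_zero] using support_coeff_pow_char_subset p x
  exact coeff_injective (Finsupp.support_subset_singleton.mp hsupp)

theorem ker_mapRingHom {R S M : Type*} [CommRing R] [CommRing S] [AddCommMonoid M]
    (f : R →+* S) :
    RingHom.ker (mapRingHom M f) = (RingHom.ker f).map singleZeroRingHom := by
  refine le_antisymm (fun x hx => ?_) (Ideal.map_le_iff_le_comap.mpr fun r hr => ?_)
  · rw [← sum_coeff_single x]
    refine Ideal.sum_mem _ fun m _ => ?_
    rw [← mul_one (x.coeff m), ← zero_add m, ← single_mul_single]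
    refine Ideal.mul_mem_right _ _ (Ideal.mem_map_of_mem _ ?_)
    simpa using congrArg (coeff · m) hx
  · simpa using hr

theorem existsUnique_isIdempotentElem_mk_single_zero {p : ℕ} (hp : p.Prime)
    {R M : Type*} [CommRing R] [AddCommGroup M] [IsAdicComplete (Ideal.span {(p : R)}) R]
    (htor : ∀ m : M, (∃ k : ℕ, k ≠ 0 ∧ k • m = 0) → ∃ n : ℕ, p ^ n • m = 0)
    {a : AddMonoidAlgebra R M ⧸ Ideal.span {(p : AddMonoidAlgebra R M)}}
    (ha : IsIdempotentElem a) :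
    ∃! e : R, IsIdempotentElem e ∧ Ideal.Quotient.mk _ (single 0 e) = a := by
  set I := Ideal.span {(p : R)}
  set π := mapRingHom M (Ideal.Quotient.mk I)
  have hker : RingHom.ker π = Ideal.span {(p : AddMonoidAlgebra R M)} := by
    rw [ker_mapRingHom, Ideal.mk_ker, Ideal.map_span, Set.image_singleton, map_natCast]
  have hmk : ∀ y z, Ideal.Quotient.mk (Ideal.span {(p : AddMonoidAlgebra R M)}) y =
      Ideal.Quotient.mk _ z ↔ π y = π z := fun y z => by
    rw [Ideal.Quotient.eq, ← hker, RingHom.sub_mem_ker_iff]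
  obtain ⟨x, rfl⟩ := Ideal.Quotient.mk_surjective a
  have hx : IsIdempotentElem (π x) := by
    rw [IsIdempotentElem, ← map_mul, ← hmk, map_mul, ha.eq]
  have hpI : ((p : ℕ) : R ⧸ I) = 0 := by
    rw [← map_natCast (Ideal.Quotient.mk I), Ideal.Quotient.eq_zero_iff_mem]
    exact Ideal.mem_span_singleton_self _
  set s := (π x).coeff 0
  have hπx : π x = single 0 s := eq_single_zero_of_isIdempotentElem hp hpI htor hx
  have hs : IsIdempotentElem s := by
    have := hx.eq
    rw [hπx, single_mul_single, add_zero] at this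
    exact single_right_injective this
  have hiff : ∀ e : R, Ideal.Quotient.mk _ (single 0 e) = Ideal.Quotient.mk _ x ↔
      Ideal.Quotient.mk I e = s := fun e => by
    rw [hmk, hπx, mapRingHom_single, single_right_inj]
  simpa only [hiff] using IsAdicComplete.existsUnique_isIdempotentElem_mk_eq hs

end AddMonoidAlgebra

open AddMonoidAlgebra in
theorem idempotents_of_completed_groupRing_general {p : ℕ} (hp : p.Prime)
    {R : Type*} [CommRing R] (hR : IsAdicComplete (Ideal.span {(p : R)}) R)
    (M : Type*) [AddCommGroup M]
    (htor : ∀ m : M, (∃ k : ℕ, k ≠ 0 ∧ k • m = 0) → ∃ n : ℕ, p ^ n • m = 0)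
    (B : Type*) [CommRing B] (f : AddMonoidAlgebra R M →+* B)
    (hB : IsAdicComplete (Ideal.span {(p : B)}) B)
    (hcompl : ∀ (n : ℕ)
      (H : Ideal.span {((p : ℕ) : AddMonoidAlgebra R M)} ^ n ≤
        (Ideal.span {(p : B)} ^ n).comap f),
      Function.Bijective (Ideal.quotientMap (Ideal.span {(p : B)} ^ n) f H)) :
    ∀ b : B, IsIdempotentElem b →
      ∃! e : R, IsIdempotentElem e ∧ f (AddMonoidAlgebra.single 0 e) = b := by
  intro b hb
  set J := Ideal.span {((p : ℕ) : AddMonoidAlgebra R M)}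
  set K := Ideal.span {(p : B)}
  have hJK : J ≤ K.comap f := by
    rw [Ideal.span_singleton_le_iff_mem, Ideal.mem_comap, map_natCast]
    exact Ideal.mem_span_singleton_self _
  have hbij := hcompl 1
  rw [pow_one, pow_one] at hbij
  let Φ := RingEquiv.ofBijective _ (hbij hJK)
  have hb_iff : ∀ e : R, IsIdempotentElem e → (f (single 0 e) = b ↔
      Ideal.Quotient.mk J (single 0 e) = Φ.symm (Ideal.Quotient.mk K b)) := fun e he => by
    rw [RingEquiv.eq_symm_apply, RingEquiv.ofBijective_apply, Ideal.quotientMap_mk]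
    refine ⟨congrArg _, IsHausdorff.eq_of_isIdempotentElem_of_mk_eq ?_ hb⟩
    exact he.map (f.comp singleZeroRingHom)
  obtain ⟨e, ⟨he, hea⟩, huniq⟩ :=
    existsUnique_isIdempotentElem_mk_single_zero hp htor
      ((hb.map (Ideal.Quotient.mk K)).map Φ.symm)
  exact ⟨e, ⟨he, (hb_iff e he).mpr hea⟩, fun e' ⟨he', h⟩ => huniq e' ⟨he', (hb_iff e' he').mp h⟩⟩

/-- Let `R` be a p-complete (discrete) commutative ring and `M` a finitely generated
abelian group whose torsion subgroup is a p-group.  Let `B` (with map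
`f : R[M] → B`) be the p-adic completion of the group ring.  Then the unit map
`R → B` induces a bijection on idempotents; equivalently,
`π₀ Spec(R[M]^∧_p) ≅ π₀ Spec R`. -/
theorem idempotents_of_completed_groupRing {p : ℕ} (hp : p.Prime)
    {R : Type*} [CommRing R] (hR : IsAdicComplete (Ideal.span {(p : R)}) R)
    (M : Type*) [AddCommGroup M] (hfg : AddGroup.FG M)
    (htor : ∀ m : M, (∃ k : ℕ, k ≠ 0 ∧ k • m = 0) → ∃ n : ℕ, p ^ n • m = 0)
    (B : Type*) [CommRing B] (f : AddMonoidAlgebra R M →+* B)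
    (hB : IsAdicComplete (Ideal.span {(p : B)}) B)
    (hcompl : ∀ (n : ℕ)
      (H : Ideal.span {((p : ℕ) : AddMonoidAlgebra R M)} ^ n ≤
        (Ideal.span {(p : B)} ^ n).comap f),
      Function.Bijective (Ideal.quotientMap (Ideal.span {(p : B)} ^ n) f H)) :
    ∀ b : B, IsIdempotentElem b →
      ∃! e : R, IsIdempotentElem e ∧ f (AddMonoidAlgebra.single 0 e) = b :=
  idempotents_of_completed_groupRing_general hp hR M htor B f hB hcompl
end
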